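/- arXiv:2605.18961 — 9 statements merged into one kernel-verified Lean document; each statement's English description precedes it below -/
import Mathlib

section
/- Let L be a natural number, P a finite type, and γ₀, γ∞ : P → Fin L × Fin L two injective maps. Then there exists a coloring η : P → Fin L such that for every color k : Fin L, the map sending p to the first coordinate of γ₀(p) is injective on {p : η p = k}, and the map sending p to the second coordinate of γ∞(p) is injective on {p : η p = k}. -/
/-!
Packet `p` is an edge of a bipartite multigraph joining row `(γ₀ p).1` to column `(γinf p).2`;
injectivity of `γ₀` and `γinf` bounds every degree by `L`, so the claim is König's edge-colouring
theorem. By Hall's theorem a bipartite multigraph of maximum degree `l > 0` has a matching that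
meets every vertex of degree `l`; giving it a colour of its own lowers the maximum degree to
`l - 1`, and we induct on `l`.
-/

open Finset

section EdgeColoring

variable {ι E : Type*} [DecidableEq ι] [Fintype E]

lemma card_fiber_compl_le {l : ℕ} (f : E → ι) (M : Set E) [DecidablePred (· ∈ M)] (i : ι)
    (hle : #{e | f e = i} ≤ l + 1) (hcov : #{e | f e = i} = l + 1 → ∃ e ∈ M, f e = i) :
    #{x : ↥Mᶜ | f x = i} ≤ l := by
  have h_card : #{x : ↥Mᶜ | f x = i} = #{e | e ∉ M ∧ f e = i} := by
    rw [← Fintype.card_subtype, ← Fintype.card_subtype]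
    exact Fintype.card_congr (Equiv.subtypeSubtypeEquivSubtypeInter (· ∈ Mᶜ) (f · = i))
  have h_sub : ({e | e ∉ M ∧ f e = i} : Finset E) ⊆ ({e | f e = i} : Finset E) :=
    monotone_filter_right _ fun _ _ => And.right
  rw [h_card]
  by_cases hfull : #{e | f e = i} = l + 1
  · obtain ⟨e₀, he₀M, he₀⟩ := hcov hfull
    have : #{e | e ∉ M ∧ f e = i} < #{e | f e = i} :=
      card_lt_card ((ssubset_iff_of_subset h_sub).2 ⟨e₀, by simpa using he₀, by simp [he₀M]⟩)
    omega
  · have := card_le_card h_sub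
    omega

variable [Fintype ι]

lemma sum_tsub_card_fiber (f : E → ι) {l : ℕ} (hf : ∀ i, #{e | f e = i} ≤ l) :
    ∑ i, (l - #{e | f e = i}) = Fintype.card ι * l - Fintype.card E := by
  rw [sum_tsub_distrib _ fun i _ => hf i, sum_card_fiberwise_eq_card_filter]
  simp

/-- The neighbourhood of row `i` once the multigraph is padded to an `l`-regular one by dummy
edges between rows and columns of degree less than `l`. -/
def candidateCols (row col : E → ι) (l : ℕ) (i : ι) : Finset ι :=
  if #{e | row e = i} < l then image col {e | row e = i} ∪ ({j | #{e | col e = j} < l} : Finset ι)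
  else image col {e | row e = i}

variable (row col : E → ι) {l : ℕ}

lemma image_subset_candidateCols (i : ι) :
    image col {e | row e = i} ⊆ candidateCols row col l i := by
  unfold candidateCols
  split_ifs
  exacts [subset_union_left, subset_rfl]

lemma card_le_card_biUnion_candidateCols (hl : 0 < l) (hrow : ∀ i, #{e | row e = i} ≤ l)
    (hcol : ∀ j, #{e | col e = j} ≤ l) (A : Finset ι) :
    #A ≤ #(A.biUnion (candidateCols row col l)) := by
  set T := A.biUnion (candidateCols row col l)
  have h_edges : ∑ i ∈ A, #{e | row e = i} ≤ ∑ j ∈ T, #{e | col e = j} := by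
    rw [sum_card_fiberwise_eq_card_filter, sum_card_fiberwise_eq_card_filter]
    refine card_le_card fun e he => ?_
    simp only [mem_filter, mem_univ, true_and] at he ⊢
    exact mem_biUnion.2
      ⟨row e, he, image_subset_candidateCols row col _ (mem_image_of_mem col (by simp))⟩
  -- A deficient row in `A` puts every deficient column into `T`, and the total deficiencies
  -- of rows and of columns agree.
  have h_deficit : ∑ i ∈ A, (l - #{e | row e = i}) ≤ ∑ j ∈ T, (l - #{e | col e = j}) := by
    by_cases h : ∀ i ∈ A, l ≤ #{e | row e = i}
    · rw [sum_eq_zero fun i hi => Nat.sub_eq_zero_of_le (h i hi)]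
      exact Nat.zero_le _
    · obtain ⟨i, hiA, hi⟩ : ∃ i ∈ A, #{e | row e = i} < l := by simpa using h
      have hD : ({j | #{e | col e = j} < l} : Finset ι) ⊆ T := fun j hj =>
        mem_biUnion.2 ⟨i, hiA, by simp only [candidateCols, if_pos hi]; exact mem_union_right _ hj⟩
      calc ∑ i ∈ A, (l - #{e | row e = i})
          ≤ ∑ i, (l - #{e | row e = i}) := sum_le_sum_of_subset (subset_univ A)
        _ = ∑ j, (l - #{e | col e = j}) := by
          rw [sum_tsub_card_fiber row hrow, sum_tsub_card_fiber col hcol]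
        _ = ∑ j ∈ {j | #{e | col e = j} < l}, (l - #{e | col e = j}) :=
          (sum_filter_of_ne fun j _ hj => by omega).symm
        _ ≤ ∑ j ∈ T, (l - #{e | col e = j}) := sum_le_sum_of_subset hD
  have h_regular : ∀ (f : E → ι) (S : Finset ι), (∀ i, #{e | f e = i} ≤ l) →
      ∑ i ∈ S, (#{e | f e = i} + (l - #{e | f e = i})) = #S * l := fun f S hf =>
    sum_const_nat fun i _ => add_tsub_cancel_of_le (hf i)
  have : #A * l ≤ #T * l := by
    rw [← h_regular row A hrow, ← h_regular col T hcol, sum_add_distrib, sum_add_distrib]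
    exact add_le_add h_edges h_deficit
  exact Nat.le_of_mul_le_mul_right this hl

lemma mem_image_of_mem_candidateCols {i j : ι} (hj : j ∈ candidateCols row col l i)
    (hfull : #{e | row e = i} = l ∨ #{e | col e = j} = l) : ∃ e, row e = i ∧ col e = j := by
  unfold candidateCols at hj
  split_ifs at hj with hi
  · rcases mem_union.1 hj with hj | hj
    · simpa using hj
    · simp only [mem_filter, mem_univ, true_and] at hj
      omega
  · simpa using hj

theorem exists_matching_covering_max_degree (hl : 0 < l) (hrow : ∀ i, #{e | row e = i} ≤ l)
    (hcol : ∀ j, #{e | col e = j} ≤ l) :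
    ∃ M : Set E, M.InjOn row ∧ M.InjOn col ∧
      (∀ i, #{e | row e = i} = l → ∃ e ∈ M, row e = i) ∧
      (∀ j, #{e | col e = j} = l → ∃ e ∈ M, col e = j) := by
  obtain ⟨f, hf_inj, hf_mem⟩ := (all_card_le_biUnion_card_iff_exists_injective _).1
    (card_le_card_biUnion_candidateCols row col hl hrow hcol)
  choose g hg using fun i : {i // ∃ e, row e = i ∧ col e = f i} => i.2
  have hg_mem (i : ι) (hfull : #{e | row e = i} = l ∨ #{e | col e = f i} = l) :
      ∃ e ∈ Set.range g, row e = i ∧ col e = f i :=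
    ⟨_, Set.mem_range_self ⟨i, mem_image_of_mem_candidateCols row col (hf_mem i) hfull⟩, hg _⟩
  refine ⟨Set.range g, ?_, ?_, fun i hi => ?_, fun j hj => ?_⟩
  · rintro _ ⟨i, rfl⟩ _ ⟨i', rfl⟩ h
    rw [Subtype.ext ((hg i).1.symm.trans (h.trans (hg i').1))]
  · rintro _ ⟨i, rfl⟩ _ ⟨i', rfl⟩ h
    rw [Subtype.ext (hf_inj ((hg i).2.symm.trans (h.trans (hg i').2)))]
  · obtain ⟨e, he, hrow_e, -⟩ := hg_mem i (.inl hi)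
    exact ⟨e, he, hrow_e⟩
  · obtain ⟨i, rfl⟩ := Finite.injective_iff_surjective.1 hf_inj j
    obtain ⟨e, he, -, hcol_e⟩ := hg_mem i (.inr hj)
    exact ⟨e, he, hcol_e⟩

theorem exists_coloring_injOn_of_card_fiber_le (l : ℕ) (hrow : ∀ i, #{e | row e = i} ≤ l)
    (hcol : ∀ j, #{e | col e = j} ≤ l) :
    ∃ η : E → Fin l, ∀ k, Set.InjOn row {e | η e = k} ∧ Set.InjOn col {e | η e = k} := by
  induction l generalizing E with
  | zero =>
    have : IsEmpty E := ⟨fun e => (card_pos.2 ⟨e, by simp⟩).ne' (Nat.le_zero.1 (hrow (row e)))⟩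
    exact ⟨isEmptyElim, fun k => k.elim0⟩
  | succ l ih =>
    classical
    obtain ⟨M, hM_row, hM_col, hM_row_full, hM_col_full⟩ :=
      exists_matching_covering_max_degree row col l.succ_pos hrow hcol
    obtain ⟨η, hη⟩ := ih (fun x : ↥Mᶜ => row x) (fun x : ↥Mᶜ => col x)
      (fun i => card_fiber_compl_le row M i (hrow i) (hM_row_full i))
      (fun j => card_fiber_compl_le col M j (hcol j) (hM_col_full j))
    refine ⟨fun e => if h : e ∈ M then Fin.last l else (η ⟨e, h⟩).castSucc, fun k => ?_⟩
    cases k using Fin.lastCases with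
    | last =>
      have : {e | (if h : e ∈ M then Fin.last l else (η ⟨e, h⟩).castSucc) = Fin.last l} ⊆ M :=
        fun e he => by_contra fun h => by simp [h] at he
      exact ⟨hM_row.mono this, hM_col.mono this⟩
    | cast k =>
      have : {e | (if h : e ∈ M then Fin.last l else (η ⟨e, h⟩).castSucc) = k.castSucc} ⊆
          Subtype.val '' {x : ↥Mᶜ | η x = k} := fun e he => by
        by_cases h : e ∈ M
        · simp only [h, dite_true, Set.mem_ofPred_eq] at he
          exact absurd he.symm k.castSucc_lt_last.ne
        · exact ⟨⟨e, h⟩, by simpa [h] using he, rfl⟩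
      exact ⟨((hη k).1.image_of_comp).mono this, ((hη k).2.image_of_comp).mono this⟩

end EdgeColoring

lemma card_fiber_fst_le {P α β : Type*} [Fintype P] [DecidableEq α] [Fintype β] (γ : P → α × β)
    (hγ : Function.Injective γ) (a : α) : #{p | (γ p).1 = a} ≤ Fintype.card β :=
  card_le_card_of_injOn (fun p => (γ p).2) (fun _ _ => mem_coe.2 (mem_univ _))
    fun _ hp _ hq h => hγ (Prod.ext ((mem_filter.1 hp).2.trans (mem_filter.1 hq).2.symm) h)

/-- **2D Color Routing (reformulated).**
Given a finite set of packets `P` with injective source and destination maps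
`γ₀, γ∞ : P → Fin L × Fin L` into the 2D grid, there is a coloring `η : P → Fin L`
such that within each color class, the sources have pairwise distinct rows
(first coordinates) and the destinations have pairwise distinct columns
(second coordinates). -/
theorem stmt0 (L : ℕ) (P : Type) [Fintype P]
    (γ₀ γinf : P → Fin L × Fin L)
    (h₀ : Function.Injective γ₀) (hinf : Function.Injective γinf) :
    ∃ η : P → Fin L, ∀ k : Fin L,
      Set.InjOn (fun p => (γ₀ p).1) {p | η p = k} ∧
      Set.InjOn (fun p => (γinf p).2) {p | η p = k} := by
  refine exists_coloring_injOn_of_card_fiber_le _ _ L (fun i => ?_) (fun j => ?_)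
  · simpa using card_fiber_fst_le γ₀ h₀ i
  · simpa using card_fiber_fst_le (Prod.swap ∘ γinf) (Prod.swap_injective.comp hinf) j
end

section
/- Let L, w, 𝔮 be natural numbers, X a finite type, and supp : X → Finset (Fin L × Fin L) a map such that (supp x).card ≤ w for every x, and for every point v ∈ Fin L × Fin L the number of x ∈ X with v ∈ supp x is at most 𝔮. Then there exists a coloring η : X → Fin (2·w·𝔮·L + 1) such that for all distinct x, x' ∈ X with η x = η x', every u ∈ supp x and v ∈ supp x' satisfy u.1 ≠ v.1 and u.2 ≠ v.2 (no point supporting x shares a row or a column with a point supporting x'). -/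
open Finset

/-- Greedy coloring for a symmetric irreflexive relation with bounded degree. -/
lemma greedy_coloring {X : Type} [Fintype X] (n : ℕ) (R : X → X → Prop)
    [DecidableRel R]
    (hsym : ∀ x y, R x y → R y x) (hirr : ∀ x, ¬ R x x)
    (hdeg : ∀ x, (Finset.univ.filter fun y => R x y).card ≤ n) :
    ∃ f : X → Fin (n + 1), ∀ x y, R x y → f x ≠ f y := by
  classical
  suffices h : ∀ s : Finset X, ∃ f : X → Fin (n + 1),
      ∀ x ∈ s, ∀ y ∈ s, R x y → f x ≠ f y by
    obtain ⟨f, hf⟩ := h Finset.univ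
    exact ⟨f, fun x y hR => hf x (mem_univ x) y (mem_univ y) hR⟩
  intro s
  induction s using Finset.induction_on with
  | empty => exact ⟨fun _ => 0, by simp⟩
  | @insert a s ha ih =>
    obtain ⟨f, hf⟩ := ih
    set T : Finset (Fin (n + 1)) := (s.filter (fun y => R a y)).image f with hT
    have hTcard : T.card < n + 1 := by
      calc T.card ≤ (s.filter (fun y => R a y)).card := Finset.card_image_le
        _ ≤ (Finset.univ.filter fun y => R a y).card :=
            Finset.card_le_card (by intro y hy; simp_all)
        _ ≤ n := hdeg a
        _ < n + 1 := Nat.lt_succ_self n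
    have hTne : T ≠ Finset.univ := by
      intro h
      rw [h] at hTcard
      simp at hTcard
    obtain ⟨c, hc⟩ : ∃ c, c ∉ T := by
      by_contra h
      push_neg at h
      have h2 : (Finset.univ : Finset (Fin (n + 1))).card ≤ T.card :=
        Finset.card_le_card (fun c _ => h c)
      simp only [Finset.card_univ, Fintype.card_fin] at h2
      omega
    refine ⟨Function.update f a c, ?_⟩
    intro x hx y hy hR
    have hxy : x ≠ y := fun h => hirr x (h ▸ hR)
    rcases Finset.mem_insert.mp hx with hxa | hxs <;>
      rcases Finset.mem_insert.mp hy with hya | hys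
    · exact absurd (hya ▸ hxa) hxy
    · have hyne : y ≠ a := fun h => ha (h ▸ hys)
      rw [hxa, Function.update_self, Function.update_of_ne hyne]
      rw [hxa] at hR
      intro h
      exact hc (Finset.mem_image.mpr ⟨y, Finset.mem_filter.mpr ⟨hys, hR⟩, h.symm⟩)
    · have hxne : x ≠ a := fun h => ha (h ▸ hxs)
      rw [hya, Function.update_self, Function.update_of_ne hxne]
      rw [hya] at hR
      intro h
      exact hc (Finset.mem_image.mpr
        ⟨x, Finset.mem_filter.mpr ⟨hxs, hsym x a hR⟩, h⟩)
    · have hxne : x ≠ a := fun h => ha (h ▸ hxs)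
      have hyne : y ≠ a := fun h => ha (h ▸ hys)
      rw [Function.update_of_ne hxne, Function.update_of_ne hyne]
      exact hf x hxs y hys hR

/-- **4D Line Coloring.**
If the checks `X` on the 2D grid `Fin L × Fin L` have supports of size at most `w`,
and every grid point lies in the support of at most `𝔮` checks, then the checks can
be colored with `2·w·𝔮·L + 1` colors so that two distinct same-colored checks never
have support points sharing a row or a column (their AB graphs are edge-disjoint). -/
theorem stmt1 (L w q : ℕ) (X : Type) [Fintype X]
    (supp : X → Finset (Fin L × Fin L))
    (hw : ∀ x : X, (supp x).card ≤ w)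
    (hq : ∀ v : Fin L × Fin L,
      (Finset.univ.filter fun x : X => v ∈ supp x).card ≤ q) :
    ∃ η : X → Fin (2 * w * q * L + 1),
      ∀ x x' : X, x ≠ x' → η x = η x' →
        ∀ u ∈ supp x, ∀ v ∈ supp x', u.1 ≠ v.1 ∧ u.2 ≠ v.2 := by
  classical
  set R : X → X → Prop := fun x y =>
    x ≠ y ∧ ∃ u ∈ supp x, ∃ v ∈ supp y, u.1 = v.1 ∨ u.2 = v.2 with hR
  have hsym : ∀ x y, R x y → R y x := by
    rintro x y ⟨hne, u, hu, v, hv, h⟩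
    exact ⟨hne.symm, v, hv, u, hu, h.imp Eq.symm Eq.symm⟩
  have hirr : ∀ x, ¬ R x x := fun x h => h.1 rfl
  have hdeg : ∀ x, (Finset.univ.filter fun y => R x y).card ≤ 2 * w * q * L := by
    intro x
    have hsub : (Finset.univ.filter fun y => R x y) ⊆
        (supp x).biUnion (fun u =>
          ((Finset.univ : Finset (Fin L × Fin L)).filter
              (fun p => p.1 = u.1 ∨ p.2 = u.2)).biUnion
            (fun v => Finset.univ.filter (fun y => v ∈ supp y))) := by
      intro y hy
      obtain ⟨-, u, hu, v, hv, h⟩ := (Finset.mem_filter.mp hy).2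
      refine Finset.mem_biUnion.mpr ⟨u, hu, Finset.mem_biUnion.mpr
        ⟨v, Finset.mem_filter.mpr ⟨mem_univ v, h.imp Eq.symm Eq.symm⟩,
          Finset.mem_filter.mpr ⟨mem_univ y, hv⟩⟩⟩
    calc (Finset.univ.filter fun y => R x y).card
        ≤ _ := Finset.card_le_card hsub
      _ ≤ ∑ u ∈ supp x, (((Finset.univ : Finset (Fin L × Fin L)).filter
              (fun p => p.1 = u.1 ∨ p.2 = u.2)).biUnion
            (fun v => Finset.univ.filter (fun y => v ∈ supp y))).card :=
          Finset.card_biUnion_le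
      _ ≤ ∑ u ∈ supp x, (2 * L * q) := by
          refine Finset.sum_le_sum fun u _ => ?_
          calc (((Finset.univ : Finset (Fin L × Fin L)).filter
                (fun p => p.1 = u.1 ∨ p.2 = u.2)).biUnion
              (fun v => Finset.univ.filter (fun y => v ∈ supp y))).card
              ≤ ∑ v ∈ ((Finset.univ : Finset (Fin L × Fin L)).filter
                  (fun p => p.1 = u.1 ∨ p.2 = u.2)),
                  (Finset.univ.filter (fun y => v ∈ supp y)).card :=
                Finset.card_biUnion_le
            _ ≤ ∑ _v ∈ ((Finset.univ : Finset (Fin L × Fin L)).filter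
                  (fun p => p.1 = u.1 ∨ p.2 = u.2)), q :=
                Finset.sum_le_sum fun v _ => hq v
            _ = ((Finset.univ : Finset (Fin L × Fin L)).filter
                  (fun p => p.1 = u.1 ∨ p.2 = u.2)).card * q := by
                rw [Finset.sum_const, smul_eq_mul]
            _ ≤ 2 * L * q := by
                have : ((Finset.univ : Finset (Fin L × Fin L)).filter
                    (fun p => p.1 = u.1 ∨ p.2 = u.2)).card ≤ 2 * L := by
                  have hsub2 : ((Finset.univ : Finset (Fin L × Fin L)).filter
                      (fun p => p.1 = u.1 ∨ p.2 = u.2)) ⊆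
                      (({u.1} : Finset (Fin L)) ×ˢ Finset.univ) ∪
                        (Finset.univ ×ˢ ({u.2} : Finset (Fin L))) := by
                    intro p hp
                    rcases (Finset.mem_filter.mp hp).2 with h | h
                    · exact Finset.mem_union_left _ (by simp [← h])
                    · exact Finset.mem_union_right _ (by simp [← h])
                  calc _ ≤ _ := Finset.card_le_card hsub2
                    _ ≤ (({u.1} : Finset (Fin L)) ×ˢ
                          (Finset.univ : Finset (Fin L))).card +
                        ((Finset.univ : Finset (Fin L)) ×ˢ
                          ({u.2} : Finset (Fin L))).card := Finset.card_union_le _ _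
                    _ = 2 * L := by simp [Finset.card_product, two_mul]
                exact Nat.mul_le_mul_right q this
      _ = (supp x).card * (2 * L * q) := by rw [Finset.sum_const, smul_eq_mul]
      _ ≤ w * (2 * L * q) := Nat.mul_le_mul_right _ (hw x)
      _ = 2 * w * q * L := by ring
  obtain ⟨f, hf⟩ := greedy_coloring (2 * w * q * L) R hsym hirr hdeg
  refine ⟨f, fun x x' hne heq u hu v hv => ?_⟩
  constructor <;> intro h <;>
    exact hf x x' ⟨hne, u, hu, v, hv, by tauto⟩ heq
end

section
/- Let ι, κ be finite types, ∂ : (ι → 𝔽₂) →ₗ (κ → 𝔽₂) an 𝔽₂-linear map, c ≥ 1 a natural number, and 𝔮 the maximum over i ∈ ι of |∂(δ_i)|. Then for every e ∈ (ι → 𝔽₂), the energy barriers satisfy Δ₁(e) ≤ Δ_c(e) + c·𝔮. -/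
/-!
Refine an optimal `c`-continuous path into a `1`-continuous one by flipping the coordinates
changed in each step one at a time. A point visited while processing the step starting at `γ t`
differs from `γ t` in at most `c` coordinates, and by linearity each coordinate changes the
syndrome weight by at most `q`, so the refined path has energy at most `Δ_c(e) + c q`.
-/

/-- The `c`-energy barrier of a destination `e` with respect to the syndrome map `d`:
the minimum, over all `c`-continuous Pauli paths `γ(0) = 0, …, γ(T) = e`
(each step changing at most `c` coordinates), of the maximum syndrome weight
`|d (γ t)|` along the path. -/
noncomputable def energyBarrier {ι κ : Type*} [Fintype ι] [Fintype κ]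
    (d : (ι → ZMod 2) →ₗ[ZMod 2] (κ → ZMod 2)) (c : ℕ) (e : ι → ZMod 2) : ℕ :=
  sInf { Δ : ℕ | ∃ (T : ℕ) (γ : ℕ → ι → ZMod 2),
    γ 0 = 0 ∧ γ T = e ∧
    (∀ t, 1 ≤ t → t ≤ T → hammingNorm (γ t - γ (t - 1)) ≤ c) ∧
    Δ = (Finset.range (T + 1)).sup fun t => hammingNorm (d (γ t)) }

open Finset

section Hamming

variable {ι : Type*} [Fintype ι] {β : ι → Type*} [∀ i, DecidableEq (β i)]

theorem hammingNorm_add_le [∀ i, AddZeroClass (β i)] (x y : ∀ i, β i) :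
    hammingNorm (x + y) ≤ hammingNorm x + hammingNorm y := by
  classical
  refine (card_le_card fun i hi => ?_).trans (card_union_le _ _)
  simp only [mem_union, mem_filter, mem_univ, true_and, Pi.add_apply] at hi ⊢
  by_contra! h
  exact hi (by rw [h.1, h.2, add_zero])

theorem hammingNorm_sum_le [∀ i, AddCommMonoid (β i)] {α : Type*} (s : Finset α)
    (f : α → ∀ i, β i) : hammingNorm (∑ a ∈ s, f a) ≤ ∑ a ∈ s, hammingNorm (f a) :=
  le_sum_of_subadditive _ hammingNorm_zero.le hammingNorm_add_le s f

theorem hammingNorm_single_le_one [DecidableEq ι] [∀ i, Zero (β i)] (i : ι) (b : β i) :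
    hammingNorm (Pi.single i b) ≤ 1 := by
  refine (card_le_card fun j hj => ?_).trans_eq (card_singleton i)
  simp only [mem_filter, mem_univ, true_and] at hj
  exact mem_singleton.mpr (by_contra fun h => hj (Pi.single_eq_of_ne h b))

theorem hammingNorm_sum_single_le_card [DecidableEq ι] [∀ i, AddCommMonoid (β i)]
    (s : Finset ι) (w : ∀ i, β i) : hammingNorm (∑ i ∈ s, Pi.single i (w i)) ≤ #s :=
  (hammingNorm_sum_le _ _).trans <|
    (sum_le_card_nsmul _ _ 1 fun i _ => hammingNorm_single_le_one i (w i)).trans_eq (by simp)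

end Hamming

section LinearMap

variable {ι κ R M : Type*} [Fintype ι] [DecidableEq ι] [Fintype κ] [Semiring R] [DecidableEq R]
  [AddCommMonoid M] [Module R M] [DecidableEq M]

theorem hammingNorm_map_le (d : (ι → R) →ₗ[R] (κ → M)) {q : ℕ}
    (hq : ∀ i, hammingNorm (d (Pi.single i 1)) ≤ q) (v : ι → R) :
    hammingNorm (d v) ≤ hammingNorm v * q := by
  have hsingle (i : ι) : hammingNorm (d (Pi.single i (v i))) ≤ q := by
    rw [← mul_one (v i), ← smul_eq_mul, Pi.single_smul, map_smul]
    exact hammingNorm_smul_le_hammingNorm.trans (hq i)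
  calc hammingNorm (d v)
      = hammingNorm (∑ i with v i ≠ 0, d (Pi.single i (v i))) := by
        rw [sum_filter_of_ne (p := fun i => v i ≠ 0)
            fun i _ h hv => h (by rw [hv, Pi.single_zero, map_zero]),
          ← map_sum, univ_sum_single]
    _ ≤ ∑ i with v i ≠ 0, hammingNorm (d (Pi.single i (v i))) := hammingNorm_sum_le _ _
    _ ≤ ∑ i with v i ≠ 0, q := sum_le_sum fun i _ => hsingle i
    _ = hammingNorm v * q := by rw [sum_const, smul_eq_mul]; rfl

end LinearMap

section Path

variable {ι κ R : Type*} [Fintype ι] [Fintype κ] [Ring R] [DecidableEq R]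

def ReachableWithin (d : (ι → R) →ₗ[R] (κ → R)) (c E : ℕ) (e : ι → R) : Prop :=
  ∃ (T : ℕ) (γ : ℕ → ι → R), γ 0 = 0 ∧ γ T = e ∧
    (∀ t, 1 ≤ t → t ≤ T → hammingNorm (γ t - γ (t - 1)) ≤ c) ∧
    ∀ t ≤ T, hammingNorm (d (γ t)) ≤ E

namespace ReachableWithin

variable {d : (ι → R) →ₗ[R] (κ → R)} {c E : ℕ} {x y : ι → R}

theorem zero : ReachableWithin d c E 0 :=
  ⟨0, fun _ => 0, rfl, rfl, fun _ _ _ => by omega, fun _ _ => by simp⟩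

theorem mono_step {c' : ℕ} (hc : c ≤ c') (hx : ReachableWithin d c E x) :
    ReachableWithin d c' E x :=
  let ⟨T, γ, h0, hT, hsteps, hE⟩ := hx
  ⟨T, γ, h0, hT, fun t h1 h2 => (hsteps t h1 h2).trans hc, hE⟩

theorem snoc (hx : ReachableWithin d c E x) (hstep : hammingNorm (y - x) ≤ c)
    (hy : hammingNorm (d y) ≤ E) : ReachableWithin d c E y := by
  obtain ⟨T, γ, h0, rfl, hsteps, hE⟩ := hx
  refine ⟨T + 1, Function.update γ (T + 1) y, ?_, by simp, fun t h1 h2 => ?_, fun t ht => ?_⟩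
  · rwa [Function.update_of_ne (by omega)]
  · rcases (show t ≤ T ∨ t = T + 1 by omega) with ht | rfl
    · rw [Function.update_of_ne (by omega), Function.update_of_ne (by omega)]
      exact hsteps t h1 ht
    · simpa using hstep
  · rcases (show t ≤ T ∨ t = T + 1 by omega) with ht | rfl
    · rw [Function.update_of_ne (by omega)]
      exact hE t ht
    · simpa using hy

variable [DecidableEq ι] {q : ℕ}

theorem add_sum_single (hq : ∀ i, hammingNorm (d (Pi.single i 1)) ≤ q)
    (hx : ReachableWithin d 1 E x) (w : ι → R) (s : Finset ι)
    (hE : hammingNorm (d x) + #s * q ≤ E) :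
    ReachableWithin d 1 E (x + ∑ i ∈ s, Pi.single i (w i)) := by
  induction s using Finset.induction_on with
  | empty => simpa using hx
  | @insert a s ha ih =>
    rw [card_insert_of_notMem ha] at hE
    have hz := ih (le_trans (by gcongr; omega) hE)
    have henergy : hammingNorm (d (x + ∑ i ∈ insert a s, Pi.single i (w i))) ≤ E :=
      calc hammingNorm (d (x + ∑ i ∈ insert a s, Pi.single i (w i)))
          ≤ hammingNorm (d x) + hammingNorm (∑ i ∈ insert a s, Pi.single i (w i)) * q := by
            rw [map_add]
            exact (hammingNorm_add_le _ _).trans (by gcongr; exact hammingNorm_map_le d hq _)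
        _ ≤ hammingNorm (d x) + (#s + 1) * q := by
            gcongr
            exact (hammingNorm_sum_single_le_card _ _).trans_eq (card_insert_of_notMem ha)
        _ ≤ E := hE
    have hsplit : x + ∑ i ∈ insert a s, Pi.single i (w i)
        = (x + ∑ i ∈ s, Pi.single i (w i)) + Pi.single a (w a) := by
      rw [sum_insert ha]; abel
    rw [hsplit] at henergy ⊢
    exact hz.snoc (by simpa using hammingNorm_single_le_one (β := fun _ => R) a (w a)) henergy

theorem of_hammingNorm_sub_le (hq : ∀ i, hammingNorm (d (Pi.single i 1)) ≤ q)
    (hx : ReachableWithin d 1 E x) (hE : hammingNorm (d x) + hammingNorm (y - x) * q ≤ E) :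
    ReachableWithin d 1 E y := by
  have hsum : ∑ i with (y - x) i ≠ 0, Pi.single i ((y - x) i) = y - x := by
    rw [sum_filter_of_ne (p := fun i => (y - x) i ≠ 0)
        fun i _ h hi => h (by rw [hi, Pi.single_zero]),
      univ_sum_single]
  have := hx.add_sum_single hq (y - x) _ hE
  rwa [hsum, add_sub_cancel] at this

theorem refineSteps (hq : ∀ i, hammingNorm (d (Pi.single i 1)) ≤ q)
    (he : ReachableWithin d c E y) : ReachableWithin d 1 (E + c * q) y := by
  obtain ⟨T, γ, h0, rfl, hsteps, hE⟩ := he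
  suffices ∀ t ≤ T, ReachableWithin d 1 (E + c * q) (γ t) from this T le_rfl
  intro t
  induction t with
  | zero => intro _; rw [h0]; exact zero
  | succ n ih =>
    intro hn
    refine (ih (by omega)).of_hammingNorm_sub_le hq ?_
    have hstep : hammingNorm (γ (n + 1) - γ n) ≤ c := by simpa using hsteps (n + 1) (by omega) hn
    exact add_le_add (hE n (by omega)) (by gcongr)

end ReachableWithin

end Path

section EnergyBarrier

variable {ι κ : Type*} [Fintype ι] [Fintype κ] {d : (ι → ZMod 2) →ₗ[ZMod 2] (κ → ZMod 2)}
  {c E : ℕ} {e : ι → ZMod 2}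

theorem energyBarrier_le (h : ReachableWithin d c E e) : energyBarrier d c e ≤ E := by
  obtain ⟨T, γ, h0, hT, hsteps, hE⟩ := h
  calc energyBarrier d c e ≤ (range (T + 1)).sup fun t => hammingNorm (d (γ t)) :=
        Nat.sInf_le ⟨T, γ, h0, hT, hsteps, rfl⟩
    _ ≤ E := Finset.sup_le fun t ht => hE t (Nat.lt_succ_iff.mp (mem_range.mp ht))

theorem reachableWithin_energyBarrier (h : ReachableWithin d c E e) :
    ReachableWithin d c (energyBarrier d c e) e := by
  obtain ⟨T, γ, h0, hT, hsteps, -⟩ := h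
  obtain ⟨T', γ', h0', hT', hsteps', hΔ⟩ : energyBarrier d c e ∈ _ :=
    Nat.sInf_mem ⟨_, T, γ, h0, hT, hsteps, rfl⟩
  exact ⟨T', γ', h0', hT', hsteps', fun t ht =>
    hΔ ▸ Finset.le_sup (f := fun t => hammingNorm (d (γ' t))) (mem_range.mpr (by omega))⟩

end EnergyBarrier

/-- **Relation between step sizes.**
If `𝔮` is the maximum over `i` of the weight `|d δ_i|` of a single-qubit syndrome,
then `Δ₁(e) ≤ Δ_c(e) + c·𝔮` for every `e`. -/
theorem stmt6 {ι κ : Type*} [Fintype ι] [Fintype κ] [DecidableEq ι]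
    (d : (ι → ZMod 2) →ₗ[ZMod 2] (κ → ZMod 2)) (c : ℕ) (hc : 1 ≤ c)
    (q : ℕ) (hq : q = Finset.univ.sup fun i : ι => hammingNorm (d (Pi.single i 1)))
    (e : ι → ZMod 2) :
    energyBarrier d 1 e ≤ energyBarrier d c e + c * q := by
  have hsingle : ∀ i, hammingNorm (d (Pi.single i 1)) ≤ q := fun i =>
    hq ▸ Finset.le_sup (f := fun i => hammingNorm (d (Pi.single i 1))) (mem_univ i)
  -- without some `c`-path to `e` the infimum defining `energyBarrier d c e` would be `sInf ∅ = 0`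
  have hflip : ReachableWithin d 1 (Fintype.card ι * q) e :=
    ReachableWithin.zero.of_hammingNorm_sub_le hsingle
      (by simpa using Nat.mul_le_mul_right q hammingNorm_le_card_fintype)
  exact energyBarrier_le
    ((reachableWithin_energyBarrier (hflip.mono_step hc)).refineSteps hsingle)
end

section
/- Let P be a finite type, V a finite type, f, g : P → V two maps, and ρ, L ≥ 1 natural numbers such that every fiber of f and every fiber of g has at most ρ·L elements. Then there exists a coloring c : P → Fin L such that for every v ∈ V and every k ∈ Fin L, the number of p ∈ P with f p = v and c p = k is at most ρ, and the number of p ∈ P with g p = v and c p = k is at most ρ. -/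
/-!
Regard packet `p` as an edge from `f p` to `g p` in a bipartite multigraph of maximum degree
`ρ L`. Adding dummy edges between left and right vertices of deficient degree (the total
deficits agree, as both sides carry every packet once) makes it `ρ L`-regular. By Hall's
theorem a regular bipartite multigraph has a perfect matching, and removing it lowers the
degree by one, so the edges split into `ρ L` matchings: a proper edge coloring (König).
Writing the colors as pairs in `Fin ρ × Fin L` and forgetting the first coordinate leaves
at most `ρ` edges of each color at every vertex.
-/

open Finset

variable {P V : Type*} [DecidableEq V]

def IsBiregular (f g : P → V) (d : ℕ) (s : Finset P) : Prop :=
  ∀ v, #{p ∈ s | f p = v} = d ∧ #{p ∈ s | g p = v} = d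

def IsProperColoring {C : Type*} (f g : P → V) (s : Finset P) (c : P → C) : Prop :=
  ∀ ⦃p⦄, p ∈ s → ∀ ⦃q⦄, q ∈ s → (f p = f q ∨ g p = g q) → c p = c q → p = q

theorem card_filter_mem_eq_mul {f : P → V} {s : Finset P} {d : ℕ}
    (hf : ∀ v, #{p ∈ s | f p = v} = d) (A : Finset V) :
    #{p ∈ s | f p ∈ A} = d * #A := by
  rw [← sum_card_fiberwise_eq_card_filter, sum_congr rfl fun v _ => hf v, sum_const, smul_eq_mul,
    mul_comm]

theorem isBiregular_one_image [Fintype V] [DecidableEq P] {f g : P → V} {σ : V → P}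
    (hf : ∀ v, f (σ v) = v) (hg : (g ∘ σ).Bijective) : IsBiregular f g 1 (univ.image σ) := by
  refine fun v => ⟨card_eq_one.2 ⟨σ v, ?_⟩, card_eq_one.2 ?_⟩
  · ext p
    simp only [mem_filter, mem_image, mem_univ, true_and, mem_singleton]
    constructor
    · rintro ⟨⟨u, rfl⟩, rfl⟩
      rw [hf]
    · rintro rfl
      exact ⟨⟨v, rfl⟩, hf v⟩
  · obtain ⟨u, rfl⟩ := hg.2 v
    refine ⟨σ u, ?_⟩
    ext p
    simp only [mem_filter, mem_image, mem_univ, true_and, mem_singleton]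
    constructor
    · rintro ⟨⟨w, rfl⟩, hw⟩
      rw [hg.1 hw]
    · rintro rfl
      exact ⟨⟨u, rfl⟩, rfl⟩

namespace IsBiregular

variable {f g : P → V} {d : ℕ} {s M : Finset P}

theorem exists_isBiregular_one_subset [Fintype V] (h : IsBiregular f g d s) (hd : 0 < d) :
    ∃ M ⊆ s, IsBiregular f g 1 M := by
  classical
  let t : V → Finset V := fun v => {p ∈ s | f p = v}.image g
  have hall : ∀ A : Finset V, #A ≤ #(A.biUnion t) := by
    intro A
    have hsub : {p ∈ s | f p ∈ A} ⊆ {p ∈ s | g p ∈ A.biUnion t} := by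
      intro p hp
      simp only [mem_filter, mem_biUnion, mem_image, t] at hp ⊢
      exact ⟨hp.1, f p, hp.2, p, ⟨hp.1, rfl⟩, rfl⟩
    have hcard := card_le_card hsub
    rw [card_filter_mem_eq_mul (fun v => (h v).1),
      card_filter_mem_eq_mul (fun v => (h v).2)] at hcard
    exact le_of_mul_le_mul_left hcard hd
  obtain ⟨τ, hτ_inj, hτ⟩ := (all_card_le_biUnion_card_iff_exists_injective t).1 hall
  have hedge : ∀ v, ∃ p ∈ s, f p = v ∧ g p = τ v := by
    simpa [t, and_assoc] using hτ
  choose σ hσs hσf hσg using hedge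
  have hgσ : g ∘ σ = τ := funext hσg
  exact ⟨univ.image σ, image_subset_iff.2 fun v _ => hσs v,
    isBiregular_one_image hσf (hgσ ▸ Finite.injective_iff_bijective.1 hτ_inj)⟩

theorem sdiff [DecidableEq P] {a b : ℕ} (hs : IsBiregular f g a s) (hM : IsBiregular f g b M)
    (hMs : M ⊆ s) : IsBiregular f g (a - b) (s \ M) := by
  have key : ∀ (φ : P → V) v,
      {p ∈ s \ M | φ p = v} = {p ∈ s | φ p = v} \ {p ∈ M | φ p = v} := by
    intro φ v; ext p; simp only [mem_filter, mem_sdiff]; tauto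
  intro v
  rw [key, key, card_sdiff_of_subset (filter_subset_filter _ hMs),
    card_sdiff_of_subset (filter_subset_filter _ hMs), (hs v).1, (hs v).2, (hM v).1, (hM v).2]
  exact ⟨rfl, rfl⟩

theorem eq_of_mem_of_mem (hM : IsBiregular f g 1 M) {p q : P} (hp : p ∈ M) (hq : q ∈ M)
    (hpq : f p = f q ∨ g p = g q) : p = q := by
  rcases hpq with hpq | hpq
  · exact card_le_one.1 (hM (f q)).1.le p (by simp [hp, hpq]) q (by simp [hq])
  · exact card_le_one.1 (hM (g q)).2.le p (by simp [hp, hpq]) q (by simp [hq])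

theorem eq_empty_of_zero (h : IsBiregular f g 0 s) : s = ∅ :=
  eq_empty_of_forall_notMem fun p hp =>
    filter_eq_empty_iff.1 (card_eq_zero.1 (h (f p)).1) hp rfl

theorem exists_isProperColoring [Fintype V] (h : IsBiregular f g d s) :
    ∃ c : P → ℕ, (∀ p ∈ s, c p < d) ∧ IsProperColoring f g s c := by
  classical
  induction d generalizing s with
  | zero => exact ⟨0, by simp [h.eq_empty_of_zero], by simp [h.eq_empty_of_zero, IsProperColoring]⟩
  | succ d ih =>
    obtain ⟨M, hMs, hM⟩ := h.exists_isBiregular_one_subset d.succ_pos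
    obtain ⟨c, hc_lt, hc⟩ := ih (h.sdiff hM hMs)
    refine ⟨fun p => if p ∈ M then d else c p, fun p hp => ?_, fun p hp q hq hpq hcol => ?_⟩
    · dsimp only
      split_ifs with hpM
      · exact d.lt_succ_self
      · exact (hc_lt p (mem_sdiff.2 ⟨hp, hpM⟩)).trans d.lt_succ_self
    · have hsdiff : ∀ {x}, x ∈ s → x ∉ M → x ∈ s \ M := fun hx hxM => mem_sdiff.2 ⟨hx, hxM⟩
      dsimp only at hcol
      split_ifs at hcol with hpM hqM hqM
      · exact hM.eq_of_mem_of_mem hpM hqM hpq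
      · exact absurd hcol (hc_lt q (hsdiff hq hqM)).ne'
      · exact absurd hcol (hc_lt p (hsdiff hp hpM)).ne
      · exact hc (hsdiff hp hpM) (hsdiff hq hqM) hpq hcol

end IsBiregular

theorem IsProperColoring.injOn_filter_left {C : Type*} {f g : P → V} {s : Finset P} {c : P → C}
    (hc : IsProperColoring f g s c) (v : V) : Set.InjOn c ↑{p ∈ s | f p = v} := by
  intro p hp q hq
  rw [mem_coe, mem_filter] at hp hq
  exact hc hp.1 hq.1 (.inl (hp.2.trans hq.2.symm))

theorem IsProperColoring.injOn_filter_right {C : Type*} {f g : P → V} {s : Finset P} {c : P → C}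
    (hc : IsProperColoring f g s c) (v : V) : Set.InjOn c ↑{p ∈ s | g p = v} := by
  intro p hp q hq
  rw [mem_coe, mem_filter] at hp hq
  exact hc hp.1 hq.1 (.inr (hp.2.trans hq.2.symm))

theorem card_filter_sum_elim {α β : Type*} [Fintype α] [Fintype β] (a : α → V) (b : β → V)
    (v : V) : #{x | Sum.elim a b x = v} = #{x | a x = v} + #{x | b x = v} := by
  rw [← card_disjSum]
  congr 1
  ext (x | x) <;> simp

theorem card_filter_sigma_fst_eq [Fintype V] (m : V → ℕ) (v : V) :
    #{x : Σ u, Fin (m u) | x.1 = v} = m v := by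
  rw [show ({x | x.1 = v} : Finset (Σ u, Fin (m u))) = ({v} : Finset V).sigma fun _ => univ by
      ext; simp,
    card_sigma, sum_singleton, card_univ, Fintype.card_fin]

theorem card_filter_snd_eq_le {α β : Type*} [Fintype α] [DecidableEq β] {c : P → α × β}
    {t : Finset P} (hc : Set.InjOn c t) (k : β) : #{p ∈ t | (c p).2 = k} ≤ Fintype.card α := by
  refine (card_le_card_of_injOn (fun p => (c p).1) (fun _ _ => mem_univ _) ?_).trans_eq card_univ
  intro p hp q hq hpq
  rw [mem_coe, mem_filter] at hp hq
  exact hc hp.1 hq.1 (Prod.ext hpq (hp.2.trans hq.2.symm))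

theorem exists_isProperColoring_fin [Fintype P] [Fintype V] {f g : P → V} {d : ℕ}
    (hf : ∀ v, #{p | f p = v} ≤ d) (hg : ∀ v, #{p | g p = v} ≤ d) :
    ∃ c : P → Fin d, IsProperColoring f g univ c := by
  -- Dummy edges: `d - deg v` new ones at each vertex `v` of either side, paired up by `e`.
  let A := Σ v, Fin (d - #{p | f p = v})
  let B := Σ v, Fin (d - #{p | g p = v})
  have hAB : Fintype.card A = Fintype.card B := by
    simp only [A, B, Fintype.card_sigma, Fintype.card_fin]
    rw [sum_tsub_distrib _ fun v _ => hf v, sum_tsub_distrib _ fun v _ => hg v,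
      ← card_eq_sum_card_fiberwise (by simp), ← card_eq_sum_card_fiberwise (by simp)]
  let e : A ≃ B := Fintype.equivOfCardEq hAB
  have hreg : IsBiregular (Sum.elim f Sigma.fst) (Sum.elim g fun a => (e a).1) d univ := by
    intro v
    rw [card_filter_sum_elim, card_filter_sum_elim, card_filter_sigma_fst_eq,
      card_equiv e (t := {b : B | b.1 = v}) (by simp), card_filter_sigma_fst_eq]
    exact ⟨Nat.add_sub_cancel' (hf v), Nat.add_sub_cancel' (hg v)⟩
  obtain ⟨c, hc_lt, hc⟩ := hreg.exists_isProperColoring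
  exact ⟨fun p => ⟨c (.inl p), hc_lt _ (mem_univ _)⟩, fun p _ q _ hpq hcol =>
    Sum.inl_injective (hc (mem_univ _) (mem_univ _) hpq (Fin.val_eq_of_eq hcol))⟩

theorem stmt7_general (P V : Type) [Fintype P] [Fintype V] [DecidableEq V]
    (f g : P → V) (ρ L : ℕ)
    (hf : ∀ v : V, (Finset.univ.filter fun p : P => f p = v).card ≤ ρ * L)
    (hg : ∀ v : V, (Finset.univ.filter fun p : P => g p = v).card ≤ ρ * L) :
    ∃ c : P → Fin L, ∀ v : V, ∀ k : Fin L,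
      (Finset.univ.filter fun p : P => f p = v ∧ c p = k).card ≤ ρ ∧
      (Finset.univ.filter fun p : P => g p = v ∧ c p = k).card ≤ ρ := by
  obtain ⟨c, hc⟩ := exists_isProperColoring_fin hf hg
  let c' : P → Fin ρ × Fin L := fun p => finProdFinEquiv.symm (c p)
  have hc' : IsProperColoring f g univ c' := fun p hp q hq hpq hcol =>
    hc hp hq hpq (finProdFinEquiv.symm.injective hcol)
  refine ⟨fun p => (c' p).2, fun v k => ⟨?_, ?_⟩⟩
  · simpa [filter_filter] using card_filter_snd_eq_le (hc'.injOn_filter_left v) k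
  · simpa [filter_filter] using card_filter_snd_eq_le (hc'.injOn_filter_right v) k

/-- **Core combinatorial step of the color-route theorem.**
Packets `P` have sources `f p` and destinations `g p` in `V`; if every fiber of
`f` and of `g` has at most `ρ·L` elements, then the packets can be colored with
`L` colors so that at most `ρ` packets of any given color share a source, and
at most `ρ` packets of any given color share a destination. -/
theorem stmt7 (P V : Type) [Fintype P] [Fintype V] [DecidableEq V]
    (f g : P → V) (ρ L : ℕ) (hρ : 1 ≤ ρ) (hL : 1 ≤ L)
    (hf : ∀ v : V, (Finset.univ.filter fun p : P => f p = v).card ≤ ρ * L)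
    (hg : ∀ v : V, (Finset.univ.filter fun p : P => g p = v).card ≤ ρ * L) :
    ∃ c : P → Fin L, ∀ v : V, ∀ k : Fin L,
      (Finset.univ.filter fun p : P => f p = v ∧ c p = k).card ≤ ρ ∧
      (Finset.univ.filter fun p : P => g p = v ∧ c p = k).card ≤ ρ :=
  stmt7_general P V f g ρ L hf hg
end

section
/- Let L and D be natural numbers, q, q' ∈ [L]^D, and i ≠ j indices in Fin D. Suppose there is a point u ∈ [L]^D such that the four points u, u + e_i, u + e_j, u + e_i + e_j all lie in the grid [L]^D and all lie in both Λ(q) and Λ(q') (here e_i denotes the unit step increasing the i-th coordinate by 1). Then q and q' agree at every coordinate k with k ∉ {i, j}. -/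
/-- `stepAt i u v` means `v = u + e_i`: the points `u` and `v` agree at every
coordinate other than `i`, and the `i`-th coordinate of `v` is that of `u` plus 1. -/
def stepAt {L D : ℕ} (i : Fin D) (u v : Fin D → Fin L) : Prop :=
  (∀ j : Fin D, j ≠ i → v j = u j) ∧ (v i : ℕ) = (u i : ℕ) + 1

/-- The star plane `Λ(q)`: points of the grid agreeing with `q` in all but at
most two coordinates. -/
def starPlane {L D : ℕ} (q : Fin D → Fin L) : Set (Fin D → Fin L) :=
  { p | Set.ncard { k : Fin D | p k ≠ q k } ≤ 2 }

lemma three_mem {D : ℕ} {S : Set (Fin D)} (h : S.ncard ≤ 2)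
    {a b c : Fin D} (hab : a ≠ b) (hac : a ≠ c) (hbc : b ≠ c)
    (ha : a ∈ S) (hb : b ∈ S) (hc : c ∈ S) : False := by
  have h3 : ({a, b, c} : Set (Fin D)).ncard = 3 :=
    Set.ncard_eq_three.mpr ⟨a, b, c, hab, hac, hbc, rfl⟩
  have hle : ({a, b, c} : Set (Fin D)).ncard ≤ S.ncard :=
    Set.ncard_le_ncard (by intro x hx; rcases hx with rfl | rfl | rfl <;> assumption)
      (Set.toFinite S)
  omega

lemma mem_diff_set {L D : ℕ} {p q : Fin D → Fin L} {k : Fin D} (h : p k ≠ q k) :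
    k ∈ { k : Fin D | p k ≠ q k } := h

lemma square_agree {L D : ℕ} {q : Fin D → Fin L} {i j : Fin D} (hij : i ≠ j)
    {u v10 v01 v11 : Fin D → Fin L}
    (h10 : stepAt i u v10) (h01 : stepAt j u v01) (h11 : stepAt j v10 v11)
    (hu : u ∈ starPlane q) (hb : v10 ∈ starPlane q) (hc : v01 ∈ starPlane q)
    (hd : v11 ∈ starPlane q) :
    ∀ k, k ≠ i → k ≠ j → u k = q k := by
  intro k hki hkj
  by_contra hk
  have hv10i : (v10 i : ℕ) = u i + 1 := h10.2
  have hv01j : (v01 j : ℕ) = u j + 1 := h01.2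
  have hv11i : v11 i = v10 i := h11.1 i hij
  have hv11j : (v11 j : ℕ) = v10 j + 1 := h11.2
  have hv10j : v10 j = u j := h10.1 j hij.symm
  have hv01i : v01 i = u i := h01.1 i hij
  have hv10k : v10 k = u k := h10.1 k hki
  have hv01k : v01 k = u k := h01.1 k hkj
  have hv11k : v11 k = v10 k := h11.1 k hkj
  have hij' := hij
  rcases eq_or_ne (q i) (u i) with hqi | hqi
  · -- q i ≠ v10 i
    have hqi' : v10 i ≠ q i := by
      intro h; rw [h, hqi] at hv10i; omega
    rcases eq_or_ne (q j) (u j) with hqj | hqj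
    · -- use v11
      have h1 : v11 i ≠ q i := hv11i ▸ hqi'
      have h2 : v11 j ≠ q j := by
        intro h; rw [h, hqj, ← hv10j] at hv11j; omega
      have h3 : v11 k ≠ q k := by rw [hv11k, hv10k]; exact hk
      exact three_mem hd hij hki.symm hkj.symm h1 h2 h3
    · -- use v10
      have h1 : v10 i ≠ q i := hqi'
      have h2 : v10 j ≠ q j := by rw [hv10j]; exact fun h => hqj h.symm
      have h3 : v10 k ≠ q k := by rw [hv10k]; exact hk
      exact three_mem hb hij hki.symm hkj.symm h1 h2 h3
  · rcases eq_or_ne (q j) (u j) with hqj | hqj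
    · -- use v01
      have h1 : v01 i ≠ q i := by rw [hv01i]; exact fun h => hqi h.symm
      have h2 : v01 j ≠ q j := by
        intro h; rw [h, hqj] at hv01j; omega
      have h3 : v01 k ≠ q k := by rw [hv01k]; exact hk
      exact three_mem hc hij hki.symm hkj.symm h1 h2 h3
    · -- use u
      have h1 : u i ≠ q i := fun h => hqi h.symm
      have h2 : u j ≠ q j := fun h => hqj h.symm
      exact three_mem hu hij hki.symm hkj.symm h1 h2 hk

/-- **Star planes sharing a square.**
If the four corners `u`, `u+e_i`, `u+e_j`, `u+e_i+e_j` of a grid square in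
directions `i ≠ j` all lie in both `Λ(q)` and `Λ(q')`, then `q` and `q'` agree
at every coordinate `k ∉ {i, j}`. -/
theorem stmt10 (L D : ℕ) (q q' : Fin D → Fin L) (i j : Fin D) (hij : i ≠ j)
    (u v10 v01 v11 : Fin D → Fin L)
    (h10 : stepAt i u v10) (h01 : stepAt j u v01) (h11 : stepAt j v10 v11)
    (hq : u ∈ starPlane q ∧ v10 ∈ starPlane q ∧ v01 ∈ starPlane q ∧ v11 ∈ starPlane q)
    (hq' : u ∈ starPlane q' ∧ v10 ∈ starPlane q' ∧ v01 ∈ starPlane q' ∧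
      v11 ∈ starPlane q') :
    ∀ k : Fin D, k ≠ i → k ≠ j → q k = q' k := by
  intro k hki hkj
  have h1 := square_agree hij h10 h01 h11 hq.1 hq.2.1 hq.2.2.1 hq.2.2.2 k hki hkj
  have h2 := square_agree hij h10 h01 h11 hq'.1 hq'.2.1 hq'.2.2.1 hq'.2.2.2 k hki hkj
  rw [← h1, ← h2]
end

section
/- Let L ≥ 1 be a natural number and q, q' ∈ [L]³. Then the subgraph of the grid graph induced on the set Λ(q) ∩ Λ(q') is nonempty and connected. Moreover, for every k ∈ Fin 3, letting i, j denote the two indices different from k, the set Λ(q) ∩ Λ(q') contains every point p ∈ [L]³ with p k = q k and (p i = q' i or p j = q' j). -/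
/-- Two points of the grid `[L]^D` are adjacent in the grid graph iff they agree
in all but exactly one coordinate, where they differ by exactly 1. -/
def gridAdj {L D : ℕ} (u v : Fin D → Fin L) : Prop :=
  ∃ i : Fin D, (∀ j : Fin D, j ≠ i → u j = v j) ∧
    ((u i : ℕ) + 1 = (v i : ℕ) ∨ (v i : ℕ) + 1 = (u i : ℕ))

/-- The grid graph on `[L]^D`. -/
def gridGraph (L D : ℕ) : SimpleGraph (Fin D → Fin L) where
  Adj := gridAdj
  symm := by
    constructor
    rintro u v ⟨i, h1, h2⟩
    exact ⟨i, fun j hj => (h1 j hj).symm, h2.symm⟩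
  loopless := by
    constructor
    rintro u ⟨i, h1, h2⟩
    rcases h2 with h | h <;> omega

/-!
In dimension 3 a point lies in `Λ(q)` iff it agrees with `q` in some coordinate. So for `i ≠ j`
the axis-parallel line `{p | p i = q i ∧ p j = q' j}` lies in `Λ(q) ∩ Λ(q')`, and it passes
through `q[j ↦ q' j]` and `q'[i ↦ q i]`; these six lines join the three points `q[l ↦ q' l]`
to one another. Every point of the intersection lies on one of the lines, except when it
agrees with `q` and `q'` in the same coordinate `a`; then the whole plane through it normal to
`a` is in the intersection, and one move inside that plane reaches one of the lines.
-/

open Function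

section Line

variable {L D : ℕ} {S : Set (Fin D → Fin L)}

def gridLineHom (p : Fin D → Fin L) (m : Fin D) (hline : ∀ v, update p m v ∈ S) :
    SimpleGraph.pathGraph L →g (gridGraph L D).induce S where
  toFun v := ⟨update p m v, hline v⟩
  map_rel' {u v} huv :=
    ⟨m, fun n hn => by simp [update_of_ne hn], by simpa using SimpleGraph.pathGraph_adj.mp huv⟩

theorem gridGraph_induce_reachable_of_update_mem {x y : S} {m : Fin D}
    (hxy : ∀ n, n ≠ m → x.1 n = y.1 n) (hline : ∀ v, update x.1 m v ∈ S) :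
    ((gridGraph L D).induce S).Reachable x y := by
  have hx : gridLineHom x.1 m hline (x.1 m) = x := Subtype.ext (update_eq_self m x.1)
  have hy : gridLineHom x.1 m hline (y.1 m) = y :=
    Subtype.ext (update_eq_iff.mpr ⟨rfl, hxy⟩)
  rw [← hx, ← hy]
  exact (SimpleGraph.pathGraph_preconnected L _ _).map _

end Line

section StarPlane

variable {L : ℕ} {q q' p : Fin 3 → Fin L}

theorem mem_starPlane_iff_exists_eq : p ∈ starPlane q ↔ ∃ i, p i = q i := by
  have hcard : {k | p k ≠ q k}.ncard ≤ 3 := by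
    simpa using Set.ncard_le_card {k | p k ≠ q k}
  calc p ∈ starPlane q ↔ {k | p k ≠ q k} ≠ Set.univ := by
        rw [Ne, Set.eq_univ_iff_ncard, Nat.card_fin]
        exact ⟨fun h : _ ≤ 2 => by omega, fun h => show _ ≤ 2 by omega⟩
    _ ↔ ∃ i, p i = q i := by simp [Set.ne_univ_iff_exists_notMem]

theorem mem_starPlane_inter {i j : Fin 3} (hi : p i = q i) (hj : p j = q' j) :
    p ∈ starPlane q ∩ starPlane q' :=
  ⟨mem_starPlane_iff_exists_eq.mpr ⟨i, hi⟩, mem_starPlane_iff_exists_eq.mpr ⟨j, hj⟩⟩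

end StarPlane

section Intersection

variable {L : ℕ} {q q' : Fin 3 → Fin L}

abbrev starPlaneInterGraph (q q' : Fin 3 → Fin L) :
    SimpleGraph ↥(starPlane q ∩ starPlane q') :=
  (gridGraph L 3).induce (starPlane q ∩ starPlane q')

theorem starPlaneInterGraph_reachable_of_eq_of_eq {x y : ↥(starPlane q ∩ starPlane q')}
    {i j : Fin 3} (hij : i ≠ j) (hxi : x.1 i = q i) (hxj : x.1 j = q' j)
    (hyi : y.1 i = q i) (hyj : y.1 j = q' j) : (starPlaneInterGraph q q').Reachable x y := by
  have third : ∀ i j : Fin 3, i ≠ j → ∃ m, m ≠ i ∧ m ≠ j ∧ ∀ n, n ≠ m → n = i ∨ n = j := by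
    decide
  obtain ⟨m, hmi, hmj, hm⟩ := third i j hij
  refine gridGraph_induce_reachable_of_update_mem (m := m) (fun n hn => ?_) (fun v => ?_)
  · rcases hm n hn with rfl | rfl
    · rw [hxi, hyi]
    · rw [hxj, hyj]
  · exact mem_starPlane_inter (i := i) (j := j) (by rwa [update_of_ne hmi.symm])
      (by rwa [update_of_ne hmj.symm])

def crossPoint (q q' : Fin 3 → Fin L) (l : Fin 3) : ↥(starPlane q ∩ starPlane q') :=
  ⟨update q l (q' l), mem_starPlane_inter (i := l + 1) (j := l)
    (update_of_ne (by simp) _ _) (update_self _ _ _)⟩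

theorem exists_reachable_crossPoint (x : ↥(starPlane q ∩ starPlane q')) :
    ∃ l, (starPlaneInterGraph q q').Reachable x (crossPoint q q' l) := by
  obtain ⟨a, hxa⟩ := mem_starPlane_iff_exists_eq.mp x.2.1
  obtain ⟨b, hxb⟩ := mem_starPlane_iff_exists_eq.mp x.2.2
  by_cases hab : a = b
  · subst hab
    obtain ⟨l, hla⟩ : ∃ l, l ≠ a := ⟨a + 1, by simp⟩
    let y : ↥(starPlane q ∩ starPlane q') :=
      ⟨update x.1 l (q' l), mem_starPlane_inter (i := a) (j := l)
        (by rwa [update_of_ne hla.symm]) (update_self _ _ _)⟩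
    have hxy : (starPlaneInterGraph q q').Reachable x y :=
      gridGraph_induce_reachable_of_update_mem (m := l) (fun n hn => (update_of_ne hn _ _).symm)
        (fun v => mem_starPlane_inter (i := a) (j := a) (by rwa [update_of_ne hla.symm])
          (by rwa [update_of_ne hla.symm]))
    exact ⟨l, hxy.trans (starPlaneInterGraph_reachable_of_eq_of_eq hla.symm
      ((update_of_ne hla.symm _ _).trans hxa) (update_self _ _ _)
      (update_of_ne hla.symm _ _) (update_self _ _ _))⟩
  · exact ⟨b, starPlaneInterGraph_reachable_of_eq_of_eq hab hxa hxb (update_of_ne hab _ _)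
      (update_self _ _ _)⟩

theorem crossPoint_reachable (l l' : Fin 3) :
    (starPlaneInterGraph q q').Reachable (crossPoint q q' l) (crossPoint q q' l') := by
  have avoid : ∀ l l' : Fin 3, ∃ k, k ≠ l ∧ k ≠ l' := by decide
  obtain ⟨k, hkl, hkl'⟩ := avoid l l'
  let z : ↥(starPlane q ∩ starPlane q') :=
    ⟨update q' k (q k), mem_starPlane_inter (i := k) (j := l) (update_self _ _ _)
      (update_of_ne hkl.symm _ _)⟩
  have hlz : (starPlaneInterGraph q q').Reachable (crossPoint q q' l) z :=
    starPlaneInterGraph_reachable_of_eq_of_eq hkl (update_of_ne hkl _ _) (update_self _ _ _)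
      (update_self _ _ _) (update_of_ne hkl.symm _ _)
  have hl'z : (starPlaneInterGraph q q').Reachable (crossPoint q q' l') z :=
    starPlaneInterGraph_reachable_of_eq_of_eq hkl' (update_of_ne hkl' _ _) (update_self _ _ _)
      (update_self _ _ _) (update_of_ne hkl'.symm _ _)
  exact hlz.trans hl'z.symm

theorem starPlaneInterGraph_connected (q q' : Fin 3 → Fin L) :
    (starPlaneInterGraph q q').Connected := by
  refine (SimpleGraph.connected_iff _).mpr ⟨fun x y => ?_, ⟨crossPoint q q' 0⟩⟩
  obtain ⟨l, hx⟩ := exists_reachable_crossPoint x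
  obtain ⟨l', hy⟩ := exists_reachable_crossPoint y
  exact (hx.trans (crossPoint_reachable l l')).trans hy.symm

end Intersection

theorem stmt11_general (L : ℕ) (q q' : Fin 3 → Fin L) :
    ((gridGraph L 3).induce (starPlane q ∩ starPlane q')).Connected ∧
      (∀ k : Fin 3, ∀ p : Fin 3 → Fin L, p k = q k →
        (∃ l : Fin 3, l ≠ k ∧ p l = q' l) →
        p ∈ starPlane q ∩ starPlane q') :=
  ⟨starPlaneInterGraph_connected q q', fun _ _ hk ⟨_, _, hl⟩ => mem_starPlane_inter hk hl⟩

/-- **Intersection of two star planes is connected.**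
For `q, q' ∈ [L]³` the subgraph of the grid graph induced on `Λ(q) ∩ Λ(q')` is
nonempty and connected; moreover, for every `k`, the intersection contains every
point `p` with `p k = q k` that agrees with `q'` at one of the other two
coordinates. -/
theorem stmt11 (L : ℕ) (hL : 1 ≤ L) (q q' : Fin 3 → Fin L) :
    ((gridGraph L 3).induce (starPlane q ∩ starPlane q')).Connected ∧
      (∀ k : Fin 3, ∀ p : Fin 3 → Fin L, p k = q k →
        (∃ l : Fin 3, l ≠ k ∧ p l = q' l) →
        p ∈ starPlane q ∩ starPlane q') :=
  stmt11_general L q q'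
end

section
/- Let L ≥ 1 and m ≥ 1 be natural numbers and q, q₁, …, q_m ∈ [L]³. Then the subgraph of the grid graph induced on the set Λ(q) ∩ (Λ(q₁) ∪ ⋯ ∪ Λ(q_m)) is nonempty and connected. -/
/-!
In dimension 3, `p ∈ Λ(q)` just says that `p` agrees with `q` in some coordinate. The set
`Λ(q) ∩ ⋃ᵢ Λ(qᵢ)` is the union of the sets `Λ(q) ∩ Λ(qᵢ)`, any two of which meet (in
`(q 0, qᵢ 1, qⱼ 2)`), so it is enough to show each `Λ(q) ∩ Λ(q')` connected. That set is in turn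
the union of the slices `{p | p a = q a} ∩ Λ(q')`, which again meet pairwise, and inside such a
slice every point reaches `q'` with its `a`-th coordinate replaced by `q a` along at most two
grid lines lying in the slice.
-/

open Function

lemma SimpleGraph.induce_iUnion_connected_of_pairwise_inter_nonempty {V ι : Type*}
    {G : SimpleGraph V} [Nonempty ι] {s : ι → Set V} (hs : ∀ i j, (s i ∩ s j).Nonempty)
    (hconn : ∀ i, (G.induce (s i)).Connected) : (G.induce (⋃ i, s i)).Connected := by
  rw [← Set.sUnion_range]
  refine G.induce_sUnion_connected_of_pairwise_not_disjoint (Set.range_nonempty s) ?_ ?_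
  · rintro _ _ ⟨i, rfl⟩ ⟨j, rfl⟩
    exact hs i j
  · rintro _ ⟨i, rfl⟩
    exact hconn i

section Lines

variable {L D : ℕ}

lemma gridGraph_induce_range_update_preconnected (x : Fin D → Fin L) (k : Fin D) :
    ((gridGraph L D).induce (Set.range (update x k))).Preconnected := by
  let f : SimpleGraph.pathGraph L →g (gridGraph L D).induce (Set.range (update x k)) :=
    { toFun := fun t => ⟨update x k t, t, rfl⟩
      map_rel' := fun {t u} htu =>
        ⟨k, fun j hj => by simp [update_of_ne hj], by simpa using SimpleGraph.pathGraph_adj.1 htu⟩ }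
  refine (SimpleGraph.pathGraph_preconnected L).map f ?_
  rintro ⟨_, t, rfl⟩
  exact ⟨t, rfl⟩

lemma gridGraph_induce_reachable_of_line {s : Set (Fin D → Fin L)} {k : Fin D}
    {x y : Fin D → Fin L} (hline : ∀ t, update x k t ∈ s) (hxy : ∀ j ≠ k, x j = y j)
    (hx : x ∈ s) (hy : y ∈ s) :
    ((gridGraph L D).induce s).Reachable ⟨x, hx⟩ ⟨y, hy⟩ := by
  have hsub : Set.range (update x k) ⊆ s := Set.range_subset_iff.2 hline
  have hx' : x ∈ Set.range (update x k) := ⟨x k, update_eq_self k x⟩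
  have hy' : y ∈ Set.range (update x k) := by
    refine ⟨y k, funext fun j => ?_⟩
    rcases eq_or_ne j k with rfl | hj
    · simp
    · simp [update_of_ne hj, hxy j hj]
  exact ((gridGraph_induce_range_update_preconnected x k) ⟨x, hx'⟩ ⟨y, hy'⟩).map
    (SimpleGraph.induceHomOfLE _ hsub).toHom

end Lines

section Dim3

variable {L : ℕ}

lemma fin_three_eq_or_eq_of_ne {a b c j : Fin 3} (hab : a ≠ b) (hca : c ≠ a) (hcb : c ≠ b)
    (hjc : j ≠ c) : j = a ∨ j = b := by
  omega

lemma mem_starPlane_iff {q p : Fin 3 → Fin L} : p ∈ starPlane q ↔ ∃ a, p a = q a := by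
  have hcard : (Set.univ : Set (Fin 3)).ncard = 3 := by simp
  have hne_univ : p ∈ starPlane q ↔ {k | p k ≠ q k} ≠ Set.univ := by
    refine ⟨fun h heq => ?_, fun h => ?_⟩
    · rw [starPlane, Set.mem_ofPred_eq, heq, hcard] at h
      omega
    · have := Set.ncard_lt_ncard (Set.ssubset_univ_iff.2 h)
      rw [hcard] at this
      exact Nat.le_of_lt_succ this
  simp [hne_univ, Set.ne_univ_iff_exists_notMem]

lemma gridGraph_induce_slice_inter_starPlane_connected (q q' : Fin 3 → Fin L) (a : Fin 3) :
    ((gridGraph L 3).induce ({p | p a = q a} ∩ starPlane q')).Connected := by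
  set Q := {p | p a = q a} ∩ starPlane q'
  set w := update q' a (q a)
  obtain ⟨b₀, hb₀⟩ := exists_ne a
  have hw : w ∈ Q := ⟨by simp [w], mem_starPlane_iff.2 ⟨b₀, update_of_ne hb₀ _ _⟩⟩
  have reach_of_ne : ∀ p (hp : p ∈ Q) b, b ≠ a → p b = q' b →
      ((gridGraph L 3).induce Q).Reachable ⟨p, hp⟩ ⟨w, hw⟩ := by
    intro p hp b hba hpb
    obtain ⟨c, hca, hcb⟩ := Fin.exists_ne_and_ne_of_two_lt a b (by norm_num)
    have hline : ∀ t, update p c t ∈ Q := fun t =>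
      ⟨by simpa [update_of_ne hca.symm] using hp.1,
        mem_starPlane_iff.2 ⟨b, by simpa [update_of_ne hcb.symm] using hpb⟩⟩
    refine gridGraph_induce_reachable_of_line hline (fun j hjc => ?_) hp hw
    rcases fin_three_eq_or_eq_of_ne hba.symm hca hcb hjc with rfl | rfl
    · simpa [w] using hp.1
    · simpa [w, update_of_ne hba] using hpb
  rw [SimpleGraph.connected_iff_exists_forall_reachable]
  refine ⟨⟨w, hw⟩, fun ⟨p, hp⟩ => SimpleGraph.Reachable.symm ?_⟩
  obtain ⟨b, hpb⟩ := mem_starPlane_iff.1 hp.2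
  rcases ne_or_eq b a with hba | rfl
  · exact reach_of_ne p hp b hba hpb
  · -- `q b = q' b`, so the whole slice lies in `Q`: slide to a point with a witness `b₀ ≠ b`
    have hline : ∀ t, update p b₀ t ∈ Q := fun t =>
      ⟨by simpa [update_of_ne hb₀.symm] using hp.1,
        mem_starPlane_iff.2 ⟨b, by simpa [update_of_ne hb₀.symm] using hpb⟩⟩
    exact (gridGraph_induce_reachable_of_line hline (fun j hj => (update_of_ne hj _ _).symm)
      hp (hline _)).trans (reach_of_ne _ (hline (q' b₀)) b₀ hb₀ (by simp))

lemma gridGraph_induce_starPlane_inter_connected (q q' : Fin 3 → Fin L) :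
    ((gridGraph L 3).induce (starPlane q ∩ starPlane q')).Connected := by
  have hunion : starPlane q ∩ starPlane q' = ⋃ a, ({p | p a = q a} ∩ starPlane q') := by
    ext p
    simp [mem_starPlane_iff]
  rw [hunion]
  refine SimpleGraph.induce_iUnion_connected_of_pairwise_inter_nonempty (fun a a' => ?_)
    (gridGraph_induce_slice_inter_starPlane_connected q q')
  obtain ⟨c, hca, hca'⟩ := Fin.exists_ne_and_ne_of_two_lt a a' (by norm_num)
  have hc : update q c (q' c) ∈ starPlane q' := mem_starPlane_iff.2 ⟨c, by simp⟩
  exact ⟨update q c (q' c), ⟨update_of_ne hca.symm _ _, hc⟩, ⟨update_of_ne hca'.symm _ _, hc⟩⟩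

end Dim3

theorem stmt12_general (L m : ℕ) (hm : 1 ≤ m)
    (q : Fin 3 → Fin L) (qs : Fin m → (Fin 3 → Fin L)) :
    ((gridGraph L 3).induce (starPlane q ∩ ⋃ i : Fin m, starPlane (qs i))).Connected := by
  have : Nonempty (Fin m) := ⟨⟨0, hm⟩⟩
  rw [Set.inter_iUnion]
  refine SimpleGraph.induce_iUnion_connected_of_pairwise_inter_nonempty (fun i j => ?_)
    (fun i => gridGraph_induce_starPlane_inter_connected q (qs i))
  have h0 : ![q 0, qs i 1, qs j 2] ∈ starPlane q := mem_starPlane_iff.2 ⟨0, rfl⟩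
  exact ⟨_, ⟨h0, mem_starPlane_iff.2 ⟨1, rfl⟩⟩, h0, mem_starPlane_iff.2 ⟨2, rfl⟩⟩

/-- **Intersection of a star plane with a union of star planes is connected.**
For `q, q₁, …, q_m ∈ [L]³` the subgraph of the grid graph induced on
`Λ(q) ∩ (Λ(q₁) ∪ ⋯ ∪ Λ(q_m))` is nonempty and connected. -/
theorem stmt12 (L m : ℕ) (hL : 1 ≤ L) (hm : 1 ≤ m)
    (q : Fin 3 → Fin L) (qs : Fin m → (Fin 3 → Fin L)) :
    ((gridGraph L 3).induce (starPlane q ∩ ⋃ i : Fin m, starPlane (qs i))).Connected :=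
  stmt12_general L m hm q qs
end

section
/- Let G be a finite simple graph and c a finite set of edges of G. Let B be the set of vertices of G incident to an odd number of edges of c, and suppose B has cardinality 2M. Then there exist M pairwise edge-disjoint paths γ₁, …, γ_M in G (walks with no repeated vertices) such that every edge of every γ_m lies in c, every endpoint of every γ_m lies in B, and every vertex of B is an endpoint of exactly one of the paths γ₁, …, γ_M. -/
/-!
Pick a vertex `v` of odd degree in `c`. The handshake lemma, applied to the edges of `c` in the
connected component of `v` (in the graph spanned by `c`), yields a second odd vertex `w` in that
component, hence a path from `v` to `w` along edges of `c`. The mod-2 boundary is additive under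
disjoint unions, and the edge set of a trail from `x` to `y` has boundary `{x} ∆ {y}`; so deleting
the edges of the path from `c` removes exactly `v` and `w` from the boundary, and induction on the
number of edges of `c` finishes the proof.
-/

open Finset SimpleGraph
open scoped symmDiff

section PathPairing

variable {V : Type*}

section Boundary

variable [Fintype V] [DecidableEq V]

def mod2Boundary (c : Finset (Sym2 V)) : Finset V := {v | Odd #{e ∈ c | v ∈ e}}

@[simp]
lemma mem_mod2Boundary {c : Finset (Sym2 V)} {v : V} :
    v ∈ mod2Boundary c ↔ Odd #{e ∈ c | v ∈ e} := by
  simp [mod2Boundary]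

lemma mod2Boundary_union {s t : Finset (Sym2 V)} (h : Disjoint s t) :
    mod2Boundary (s ∪ t) = mod2Boundary s ∆ mod2Boundary t := by
  ext v
  rw [mem_symmDiff, mem_mod2Boundary, mem_mod2Boundary, mem_mod2Boundary, filter_union,
    card_union_of_disjoint (disjoint_filter_filter h), Nat.odd_add, ← Nat.not_odd_iff_even]
  tauto

lemma mod2Boundary_sdiff {s t : Finset (Sym2 V)} (h : t ⊆ s) :
    mod2Boundary (s \ t) = mod2Boundary s ∆ mod2Boundary t := by
  conv_rhs => rw [← sdiff_union_of_subset h, mod2Boundary_union sdiff_disjoint,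
    symmDiff_symmDiff_cancel_right]

lemma mod2Boundary_singleton {u z : V} (h : u ≠ z) :
    mod2Boundary {s(u, z)} = {u} ∆ {z} := by
  ext x
  by_cases hx : x = u ∨ x = z
  · rcases hx with rfl | rfl <;> simp [filter_singleton, mem_symmDiff, h, h.symm]
  · simp_all [filter_singleton, mem_symmDiff]

lemma SimpleGraph.Walk.IsTrail.mod2Boundary_edges {G : SimpleGraph V} {x y : V}
    {p : G.Walk x y} (hp : p.IsTrail) : mod2Boundary p.edges.toFinset = {x} ∆ {y} := by
  induction p with
  | nil => simp [mod2Boundary]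
  | @cons u z y h q ih =>
    obtain ⟨hfresh, hq⟩ : s(u, z) ∉ q.edges ∧ q.IsTrail := by simpa [Walk.isTrail_def] using hp
    rw [Walk.edges_cons, List.toFinset_cons, insert_eq,
      mod2Boundary_union (disjoint_singleton_left.2 (by simpa using hfresh)),
      mod2Boundary_singleton h.ne, ih hq, symmDiff_assoc, symmDiff_symmDiff_cancel_left]

lemma even_card_mod2Boundary {c : Finset (Sym2 V)} (hc : ∀ e ∈ c, ¬ e.IsDiag) :
    Even #(mod2Boundary c) := by
  have hdouble : ∑ v, #{e ∈ c | v ∈ e} = ∑ e ∈ c, 2 := calc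
    _ = ∑ e ∈ c, #{v | v ∈ e} := sum_card_bipartiteAbove_eq_sum_card_bipartiteBelow _
    _ = ∑ e ∈ c, 2 := sum_congr rfl fun e he => by
      rw [← Sym2.card_toFinset_of_not_isDiag e (hc e he)]
      congr 1
      ext
      simp
  rw [mod2Boundary, ← even_sum_iff_even_card_odd, hdouble, sum_const, smul_eq_mul]
  exact even_two.mul_left _

end Boundary

lemma SimpleGraph.reachable_fromEdgeSet_of_mem {c : Set (Sym2 V)} {e : Sym2 V} (he : e ∈ c)
    {u x : V} (hu : u ∈ e) (hx : x ∈ e) : (fromEdgeSet c).Reachable u x := by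
  obtain rfl | hux := eq_or_ne u x
  · rfl
  · rw [(Sym2.mem_and_mem_iff hux).1 ⟨hu, hx⟩] at he
    exact ((fromEdgeSet_adj c).2 ⟨he, hux⟩).reachable

lemma SimpleGraph.Reachable.exists_isPath_of_fromEdgeSet {G : SimpleGraph V} {c : Set (Sym2 V)}
    (hc : c ⊆ G.edgeSet) {v w : V} (h : (fromEdgeSet c).Reachable v w) :
    ∃ p : G.Walk v w, p.IsPath ∧ ∀ e ∈ p.edges, e ∈ c := by
  classical
  obtain ⟨q⟩ := h
  have hqc : ∀ e ∈ q.toPath.val.edges, e ∈ c := fun e he => by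
    have hmem := q.toPath.val.edges_subset_edgeSet he
    rw [edgeSet_fromEdgeSet] at hmem
    exact hmem.1
  refine ⟨q.toPath.val.transfer G fun e he => hc (hqc e he),
    q.toPath.property.transfer _, ?_⟩
  simpa [Walk.edges_transfer] using hqc

section Component

variable [Fintype V] [DecidableEq V]

lemma mod2Boundary_filter_reachable (c : Finset (Sym2 V)) (v : V) :
    mod2Boundary {e ∈ c | ∀ x ∈ e, (fromEdgeSet (c : Set (Sym2 V))).Reachable v x} =
      {u ∈ mod2Boundary c | (fromEdgeSet (c : Set (Sym2 V))).Reachable v u} := by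
  ext u
  by_cases hu : (fromEdgeSet (c : Set (Sym2 V))).Reachable v u
  · have hcomponent : {e ∈ {e ∈ c | ∀ x ∈ e, (fromEdgeSet (c : Set (Sym2 V))).Reachable v x} |
        u ∈ e} = {e ∈ c | u ∈ e} := by
      rw [filter_filter]
      exact filter_congr fun e he => and_iff_right_of_imp fun hue x hx =>
        hu.trans (reachable_fromEdgeSet_of_mem (mem_coe.2 he) hue hx)
    simp only [mem_mod2Boundary, hcomponent, mem_filter, hu, and_true]
  · have hempty : {e ∈ {e ∈ c | ∀ x ∈ e, (fromEdgeSet (c : Set (Sym2 V))).Reachable v x} |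
        u ∈ e} = ∅ :=
      filter_eq_empty_iff.2 fun e he hue => hu ((mem_filter.1 he).2 u hue)
    simp [hempty, hu]

lemma exists_ne_reachable_mem_mod2Boundary {c : Finset (Sym2 V)} (hc : ∀ e ∈ c, ¬ e.IsDiag)
    {v : V} (hv : v ∈ mod2Boundary c) :
    ∃ w ∈ mod2Boundary c, w ≠ v ∧ (fromEdgeSet (c : Set (Sym2 V))).Reachable v w := by
  have heven := even_card_mod2Boundary (c := {e ∈ c | ∀ x ∈ e,
    (fromEdgeSet (c : Set (Sym2 V))).Reachable v x}) fun e he => hc e (mem_filter.1 he).1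
  rw [mod2Boundary_filter_reachable] at heven
  set R := {u ∈ mod2Boundary c | (fromEdgeSet (c : Set (Sym2 V))).Reachable v u}
  have hpos : 0 < #R := card_pos.2 ⟨v, mem_filter.2 ⟨hv, Reachable.refl v⟩⟩
  obtain ⟨w, hw, hwv⟩ := exists_mem_ne (s := R) (by obtain ⟨k, hk⟩ := heven; omega) v
  exact ⟨w, (mem_filter.1 hw).1, hwv, (mem_filter.1 hw).2⟩

lemma exists_isPath_between_mem_mod2Boundary {G : SimpleGraph V} {c : Finset (Sym2 V)}
    (hc : ∀ e ∈ c, e ∈ G.edgeSet) {v : V} (hv : v ∈ mod2Boundary c) :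
    ∃ w ∈ mod2Boundary c, w ≠ v ∧ ∃ p : G.Walk v w, p.IsPath ∧ ∀ e ∈ p.edges, e ∈ c := by
  obtain ⟨w, hw, hwv, hreach⟩ :=
    exists_ne_reachable_mem_mod2Boundary (fun e he => G.not_isDiag_of_mem_edgeSet (hc e he)) hv
  exact ⟨w, hw, hwv, hreach.exists_isPath_of_fromEdgeSet hc⟩

end Component

structure IsPathPairing (G : SimpleGraph V) (c : Finset (Sym2 V)) (B : Finset V) {M : ℕ}
    (ends : Fin M → V × V) (γ : ∀ m, G.Walk (ends m).1 (ends m).2) : Prop where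
  isPath : ∀ m, (γ m).IsPath
  edges_mem : ∀ m, ∀ e ∈ (γ m).edges, e ∈ c
  edges_disjoint : ∀ m m', m ≠ m' → ∀ e ∈ (γ m).edges, e ∉ (γ m').edges
  ends_mem : ∀ m, (ends m).1 ∈ B ∧ (ends m).2 ∈ B
  existsUnique_end : ∀ v ∈ B, ∃! m, v = (ends m).1 ∨ v = (ends m).2

lemma isPathPairing_empty (G : SimpleGraph V) (c : Finset (Sym2 V)) :
    IsPathPairing G c ∅ finZeroElim (fun m => m.elim0) :=
  ⟨finZeroElim, finZeroElim, finZeroElim, finZeroElim, by simp⟩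

lemma IsPathPairing.cons [DecidableEq V] {G : SimpleGraph V} {c : Finset (Sym2 V)}
    {B : Finset V} {v w : V} (p : G.Walk v w) (hp : p.IsPath) (hpc : ∀ e ∈ p.edges, e ∈ c)
    (hv : v ∈ B) (hw : w ∈ B) {M : ℕ} {ends : Fin M → V × V}
    {γ : ∀ m, G.Walk (ends m).1 (ends m).2}
    (h : IsPathPairing G (c \ p.edges.toFinset) (B \ {v, w}) ends γ) :
    IsPathPairing G c B (Fin.cons (v, w) ends)
      (Fin.cases (motive := fun m => G.Walk (Fin.cons (α := fun _ => V × V) (v, w) ends m).1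
        (Fin.cons (α := fun _ => V × V) (v, w) ends m).2) p γ) := by
  have hfresh : ∀ i, ∀ e ∈ (γ i).edges, e ∉ p.edges := fun i e he hep =>
    (mem_sdiff.1 (h.edges_mem i e he)).2 (List.mem_toFinset.2 hep)
  have hends : ∀ i, ∀ u, u = (ends i).1 ∨ u = (ends i).2 → u ∈ B \ {v, w} := by
    rintro i u (rfl | rfl)
    exacts [(h.ends_mem i).1, (h.ends_mem i).2]
  refine ⟨Fin.cases hp h.isPath, Fin.cases hpc fun i e he => (mem_sdiff.1 (h.edges_mem i e he)).1,
    ?_, Fin.cases ⟨hv, hw⟩ fun i => ⟨(mem_sdiff.1 (h.ends_mem i).1).1,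
      (mem_sdiff.1 (h.ends_mem i).2).1⟩, fun u hu => ?_⟩
  · refine Fin.cases (Fin.cases (absurd rfl) fun j _ e he hej => hfresh j e hej he) fun i => ?_
    refine Fin.cases (fun _ => hfresh i) fun j hij => h.edges_disjoint i j ?_
    exact fun hij' => hij (hij' ▸ rfl)
  · by_cases hvw : u = v ∨ u = w
    · refine ⟨0, hvw, Fin.cases (fun _ => rfl) fun i hi => ?_⟩
      have := mem_sdiff.1 (hends i u hi)
      simp_all
    · obtain ⟨i, hi, huniq⟩ := h.existsUnique_end u (by simp_all)
      refine ⟨i.succ, hi, Fin.cases (fun h0 => absurd h0 hvw) fun j hj => ?_⟩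
      rw [huniq j hj]

theorem exists_isPathPairing_mod2Boundary [Fintype V] [DecidableEq V] {G : SimpleGraph V}
    {c : Finset (Sym2 V)} (hc : ∀ e ∈ c, e ∈ G.edgeSet) {M : ℕ}
    (hM : #(mod2Boundary c) = 2 * M) :
    ∃ (ends : Fin M → V × V) (γ : ∀ m, G.Walk (ends m).1 (ends m).2),
      IsPathPairing G c (mod2Boundary c) ends γ := by
  induction c using Finset.strongInduction generalizing M with
  | H c ih =>
  cases M with
  | zero =>
    rw [card_eq_zero.1 hM]
    exact ⟨_, _, isPathPairing_empty G c⟩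
  | succ M =>
    obtain ⟨v, hv⟩ := card_pos.1 (by omega : 0 < #(mod2Boundary c))
    obtain ⟨w, hw, hwv, p, hp, hpc⟩ := exists_isPath_between_mem_mod2Boundary hc hv
    have hPc : p.edges.toFinset ⊆ c := fun e he => hpc e (List.mem_toFinset.1 he)
    have hboundary : mod2Boundary (c \ p.edges.toFinset) = mod2Boundary c \ {v, w} := by
      rw [mod2Boundary_sdiff hPc, hp.isTrail.mod2Boundary_edges]
      ext u
      by_cases hu : u = v ∨ u = w
      · rcases hu with rfl | rfl <;> simp [mem_symmDiff, hv, hw, hwv, hwv.symm]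
      · simp_all [mem_symmDiff]
    have hPne : p.edges.toFinset.Nonempty :=
      (List.toFinset_nonempty_iff _).2 fun hnil => Walk.not_nil_of_ne hwv.symm
        (Walk.edges_eq_nil.1 hnil)
    have hcard : #(mod2Boundary (c \ p.edges.toFinset)) = 2 * M := by
      rw [hboundary, card_sdiff_of_subset (insert_subset hv (singleton_subset_iff.2 hw)),
        card_pair hwv.symm, hM]
      omega
    obtain ⟨ends, γ, h⟩ := ih _ (sdiff_ssubset hPc hPne)
      (fun e he => hc e (mem_sdiff.1 he).1) hcard
    exact ⟨_, _, IsPathPairing.cons p hp hpc hv hw (hboundary ▸ h)⟩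

end PathPairing

/-- **Edge-disjoint path decomposition of an even-boundary edge set.**
Let `c` be a finite set of edges of a finite simple graph `G`, and let `B` be
the set of vertices incident to an odd number of edges of `c`; suppose
`|B| = 2M`. Then there are `M` pairwise edge-disjoint paths in `G`, all of whose
edges lie in `c`, all of whose endpoints lie in `B`, such that every vertex of
`B` is an endpoint of exactly one of the paths. -/
theorem stmt14 {V : Type} [Fintype V] [DecidableEq V] (G : SimpleGraph V)
    (c : Finset (Sym2 V)) (hc : ∀ e ∈ c, e ∈ G.edgeSet) (M : ℕ)
    (B : Finset V)
    (hB : B = Finset.univ.filter fun v : V => Odd ((c.filter fun e => v ∈ e).card))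
    (hcard : B.card = 2 * M) :
    ∃ (ends : Fin M → V × V) (γ : ∀ m : Fin M, G.Walk (ends m).1 (ends m).2),
      (∀ m : Fin M, (γ m).IsPath) ∧
      (∀ m : Fin M, ∀ e ∈ (γ m).edges, e ∈ c) ∧
      (∀ m m' : Fin M, m ≠ m' → ∀ e ∈ (γ m).edges, e ∉ (γ m').edges) ∧
      (∀ m : Fin M, (ends m).1 ∈ B ∧ (ends m).2 ∈ B) ∧
      (∀ v ∈ B, ∃! m : Fin M, v = (ends m).1 ∨ v = (ends m).2) := by
  have hB' : B = mod2Boundary c := hB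
  subst hB'
  obtain ⟨ends, γ, h⟩ := exists_isPathPairing_mod2Boundary hc hcard
  exact ⟨ends, γ, h.isPath, h.edges_mem, h.edges_disjoint, h.ends_mem, h.existsUnique_end⟩
end

section
/- Let L ≥ 2 and m be natural numbers, S a finite nonempty type, P a finite type, γ : S → P → (Fin 3 → Fin L) a family of maps, X a finite type, and R : X → Finset P with (R x).card ≤ m for every x. For x ∈ X, define EdgeSet(x) as the union over s ∈ S and p ∈ R x of the set of grid edges both of whose endpoints lie in λ(γ s p), and define FaceSet(x) as the union over s ∈ S and p ∈ R x of the set of grid squares all four of whose corners lie in Λ(γ s p). Assume that for ALL distinct x, x' ∈ X the sets EdgeSet(x) and EdgeSet(x') are disjoint. Then there exists a coloring ω : X → Fin (3·|S|²·m·L + 1) such that for all distinct x, x' ∈ X with ω x = ω x', the sets FaceSet(x) and FaceSet(x') are disjoint. -/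
/-- The star graph `λ(q)`: points of the grid agreeing with `q` in all but at
most one coordinate. -/
def starGraph {L D : ℕ} (q : Fin D → Fin L) : Set (Fin D → Fin L) :=
  { p | Set.ncard { i : Fin D | p i ≠ q i } ≤ 1 }

/-- The set of grid edges (as unordered pairs) both of whose endpoints lie in
the set `T` of grid points. -/
def edgesIn {L D : ℕ} (T : Set (Fin D → Fin L)) : Set (Sym2 (Fin D → Fin L)) :=
  { e | ∃ u v : Fin D → Fin L, e = s(u, v) ∧ gridAdj u v ∧ u ∈ T ∧ v ∈ T }

/-- The set of grid squares (each given as the set of its four corners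
`{u, u+e_i, u+e_j, u+e_i+e_j}`, `i ≠ j`) all of whose corners lie in the set `T`
of grid points. -/
def squaresIn {L D : ℕ} (T : Set (Fin D → Fin L)) : Set (Set (Fin D → Fin L)) :=
  { f | ∃ (u v10 v01 v11 : Fin D → Fin L) (i j : Fin D), i ≠ j ∧
      stepAt i u v10 ∧ stepAt j u v01 ∧ stepAt j v10 v11 ∧
      f = {u, v10, v01, v11} ∧ u ∈ T ∧ v10 ∈ T ∧ v01 ∈ T ∧ v11 ∈ T }

theorem greedy_coloring_s17 {X : Type} [Fintype X] (Rel : X → X → Prop)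
    (hsymm : ∀ x y, Rel x y → Rel y x) (N : ℕ)
    (hdeg : ∀ x : X, ∃ F : Finset X, F.card ≤ N ∧ ∀ y, y ≠ x → Rel x y → y ∈ F) :
    ∃ ω : X → Fin (N + 1), ∀ x x', x ≠ x' → Rel x x' → ω x ≠ ω x' := by
  classical
  suffices h : ∀ T : Finset X, ∃ ω : X → Fin (N + 1),
      ∀ x ∈ T, ∀ x' ∈ T, x ≠ x' → Rel x x' → ω x ≠ ω x' by
    obtain ⟨ω, hω⟩ := h Finset.univ
    exact ⟨ω, fun x x' h1 h2 => hω x (Finset.mem_univ x) x' (Finset.mem_univ x') h1 h2⟩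
  intro T
  induction T using Finset.induction_on with
  | empty => exact ⟨fun _ => 0, by simp⟩
  | @insert a T ha ih =>
    obtain ⟨ω, hω⟩ := ih
    obtain ⟨F, hF, hFmem⟩ := hdeg a
    have hcard : (F.image ω).card ≤ N :=
      le_trans Finset.card_image_le hF
    have : ∃ c : Fin (N + 1), c ∉ F.image ω := by
      by_contra hc
      push_neg at hc
      have h2 : (Finset.univ : Finset (Fin (N + 1))).card ≤ (F.image ω).card :=
        Finset.card_le_card (fun c _ => hc c)
      simp only [Finset.card_univ, Fintype.card_fin] at h2
      omega
    obtain ⟨c, hc⟩ := this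
    refine ⟨Function.update ω a c, ?_⟩
    intro x hx x' hx' hne hrel
    rcases Finset.mem_insert.mp hx with hxa | hxT
    · rcases Finset.mem_insert.mp hx' with hx'a | hx'T
      · exact absurd (hxa.trans hx'a.symm) hne
      · subst hxa
        have hx'ne : x' ≠ x := by rintro rfl; exact ha hx'T
        rw [Function.update_self, Function.update_of_ne hx'ne]
        intro h
        exact hc (h ▸ Finset.mem_image_of_mem ω (hFmem x' hx'ne hrel))
    · rcases Finset.mem_insert.mp hx' with hx'a | hx'T
      · subst hx'a
        have hxne : x ≠ x' := by rintro rfl; exact ha hxT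
        rw [Function.update_self, Function.update_of_ne hxne]
        intro h
        exact hc (h ▸ Finset.mem_image_of_mem ω (hFmem x hxne (hsymm _ _ hrel)))
      · rw [Function.update_of_ne (by rintro rfl; exact ha hxT),
          Function.update_of_ne (by rintro rfl; exact ha hx'T)]
        exact hω x hxT x' hx'T hne hrel

lemma fin3_third (i j : Fin 3) (h : i ≠ j) : ∃ k, k ≠ i ∧ k ≠ j := by revert i j; decide

lemma fin3_unique (i j k k' : Fin 3) (hij : i ≠ j) (hki : k ≠ i) (hkj : k ≠ j)
    (hk'i : k' ≠ i) (hk'j : k' ≠ j) : k = k' := by revert i j k k'; decide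

lemma fin3_cover (k ik i0 l : Fin 3) (h1 : k ≠ ik) (h2 : i0 ≠ k) (h3 : i0 ≠ ik)
    (h4 : l ≠ i0) : l = k ∨ l = ik := by revert k ik i0 l; decide

lemma corner_disj {L : ℕ} (q c : Fin 3 → Fin L) (i j k : Fin 3) (hij : i ≠ j)
    (hki : k ≠ i) (hkj : k ≠ j) (hc : c ∈ starPlane q) (hk : c k ≠ q k) :
    c i = q i ∨ c j = q j := by
  by_contra h
  push_neg at h
  have hsub : ({i, j, k} : Set (Fin 3)) ⊆ {l | c l ≠ q l} := by
    intro l hl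
    rcases hl with rfl | rfl | rfl
    · exact h.1
    · exact h.2
    · exact hk
  have h3 : ({i, j, k} : Set (Fin 3)).ncard = 3 :=
    Set.ncard_eq_three.mpr ⟨i, j, k, hij, hki.symm, hkj.symm, rfl⟩
  have hle := Set.ncard_le_ncard hsub (Set.toFinite _)
  rw [h3] at hle
  have : Set.ncard {l | c l ≠ q l} ≤ 2 := hc
  omega

lemma square_fixed_coord {L : ℕ} (q u v10 v01 v11 : Fin 3 → Fin L) (i j k : Fin 3)
    (hij : i ≠ j) (hki : k ≠ i) (hkj : k ≠ j)
    (h10 : stepAt i u v10) (h01 : stepAt j u v01) (h11 : stepAt j v10 v11)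
    (hu : u ∈ starPlane q) (hv10 : v10 ∈ starPlane q) (hv01 : v01 ∈ starPlane q)
    (hv11 : v11 ∈ starPlane q) : u k = q k := by
  by_contra hne
  have e10j : v10 j = u j := h10.1 j (Ne.symm hij)
  have e10k : v10 k = u k := h10.1 k hki
  have e01i : v01 i = u i := h01.1 i hij
  have e01k : v01 k = u k := h01.1 k hkj
  have e11i : v11 i = v10 i := h11.1 i hij
  have e11k : v11 k = v10 k := h11.1 k hkj
  have e11j : v11 j = v01 j := by
    apply Fin.ext
    rw [h11.2, h01.2, e10j]
  have hne10 : u i ≠ v10 i := by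
    intro h
    have := h10.2
    rw [← h] at this
    omega
  have hne01 : u j ≠ v01 j := by
    intro h
    have := h01.2
    rw [← h] at this
    omega
  have Du := corner_disj q u i j k hij hki hkj hu hne
  have D10 := corner_disj q v10 i j k hij hki hkj hv10 (by rw [e10k]; exact hne)
  have D01 := corner_disj q v01 i j k hij hki hkj hv01 (by rw [e01k]; exact hne)
  have D11 := corner_disj q v11 i j k hij hki hkj hv11 (by rw [e11k, e10k]; exact hne)
  rw [e10j] at D10
  rw [e01i] at D01
  rw [e11i, e11j] at D11
  rcases Du with hA | hB
  · have h10i : v10 i ≠ q i := fun h => hne10 (hA.trans h.symm)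
    rcases D11 with h | h01j
    · exact h10i h
    · rcases D10 with h | huj
      · exact h10i h
      · exact hne01 (huj.trans h01j.symm)
  · have h01j : v01 j ≠ q j := fun h => hne01 (hB.trans h.symm)
    rcases D11 with h10i | h
    · rcases D01 with hui | h
      · exact hne10 (hui.trans h10i.symm)
      · exact h01j h
    · exact h01j h

lemma squares_meet {L : ℕ} (q q' : Fin 3 → Fin L) (f : Set (Fin 3 → Fin L))
    (h1 : f ∈ squaresIn (starPlane q)) (h2 : f ∈ squaresIn (starPlane q')) :
    ∃ k : Fin 3, q k = q' k := by
  obtain ⟨u, v10, v01, v11, i, j, hij, h10, h01, h11, hfeq, hu, hA, hB, hC⟩ := h1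
  obtain ⟨u', w10, w01, w11, i', j', hij', g10, g01, g11, hfeq', hu', hA', hB', hC'⟩ := h2
  obtain ⟨k, hki, hkj⟩ := fin3_third i j hij
  have hqk : u k = q k :=
    square_fixed_coord q u v10 v01 v11 i j k hij hki hkj h10 h01 h11 hu hA hB hC
  have hconst : ∀ z ∈ f, z k = u k := by
    rw [hfeq]
    rintro z (rfl | rfl | rfl | rfl)
    · rfl
    · exact h10.1 k hki
    · exact h01.1 k hkj
    · rw [h11.1 k hkj]; exact h10.1 k hki
  have hu'f : u' ∈ f := by rw [hfeq']; left; rfl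
  have hw10f : w10 ∈ f := by rw [hfeq']; right; left; rfl
  have hw01f : w01 ∈ f := by rw [hfeq']; right; right; left; rfl
  have hki' : k ≠ i' := by
    intro h
    have e1 := hconst u' hu'f
    have e2 := hconst w10 hw10f
    have e3 := g10.2
    rw [← h, e1, e2] at e3
    omega
  have hkj' : k ≠ j' := by
    intro h
    have e1 := hconst u' hu'f
    have e2 := hconst w01 hw01f
    have e3 := g01.2
    rw [← h, e1, e2] at e3
    omega
  have hqk' : u' k = q' k :=
    square_fixed_coord q' u' w10 w01 w11 i' j' k hij' hki' hkj' g10 g01 g11 hu' hA' hB' hC'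
  exact ⟨k, by rw [← hqk, ← hqk', hconst u' hu'f]⟩

lemma shared_edge {L : ℕ} (hL : 2 ≤ L) (q q' : Fin 3 → Fin L) (i0 : Fin 3)
    (hagree : ∀ l, l ≠ i0 → q l = q' l) :
    ∃ e, e ∈ edgesIn (starGraph q) ∧ e ∈ edgesIn (starGraph q') := by
  set a := Function.update q i0 (⟨0, by omega⟩ : Fin L) with ha
  set b := Function.update q i0 (⟨1, by omega⟩ : Fin L) with hb
  have hadj : gridAdj a b := by
    refine ⟨i0, fun l hl => ?_, Or.inl ?_⟩
    · rw [ha, hb, Function.update_of_ne hl, Function.update_of_ne hl]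
    · rw [ha, hb, Function.update_self, Function.update_self]
  have hstar : ∀ (c r : Fin 3 → Fin L), (∀ l, l ≠ i0 → c l = r l) → c ∈ starGraph r := by
    intro c r hr
    show Set.ncard {l | c l ≠ r l} ≤ 1
    have hsub : {l | c l ≠ r l} ⊆ ({i0} : Set (Fin 3)) := by
      intro l hl
      by_contra hne
      simp only [Set.mem_singleton_iff] at hne
      exact hl (hr l hne)
    calc Set.ncard {l | c l ≠ r l} ≤ ({i0} : Set (Fin 3)).ncard :=
          Set.ncard_le_ncard hsub (Set.toFinite _)
      _ = 1 := Set.ncard_singleton i0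
  have hal : ∀ l, l ≠ i0 → a l = q l := fun l hl => by
    rw [ha, Function.update_of_ne hl]
  have hbl : ∀ l, l ≠ i0 → b l = q l := fun l hl => by
    rw [hb, Function.update_of_ne hl]
  exact ⟨s(a, b),
    ⟨a, b, rfl, hadj, hstar a q hal, hstar b q hbl⟩,
    ⟨a, b, rfl, hadj, hstar a q' (fun l hl => (hal l hl).trans (hagree l hl)),
      hstar b q' (fun l hl => (hbl l hl).trans (hagree l hl))⟩⟩

/-- **5D Plane Coloring.**
Given color routes `γ s p ∈ [L]³` and checks `x ∈ X` with at most `m` adjacent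
packets `R x`, if the edge sets `⋃_{s, p ∈ R x} edges of λ(γ s p)` of all the
distinct checks are pairwise disjoint, then the checks can be colored with
`3·|S|²·m·L + 1` colors so that two distinct same-colored checks have disjoint
face sets `⋃_{s, p ∈ R x} squares of Λ(γ s p)`. -/
theorem stmt17 (L m : ℕ) (hL : 2 ≤ L) (S : Type) [Fintype S] [Nonempty S]
    (P : Type) [Fintype P] [DecidableEq P] (γ : S → P → (Fin 3 → Fin L))
    (X : Type) [Fintype X] (R : X → Finset P)
    (hm : ∀ x : X, (R x).card ≤ m)
    (hedisj : ∀ x x' : X, x ≠ x' →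
      Disjoint (⋃ s : S, ⋃ p ∈ R x, edgesIn (starGraph (γ s p)))
        (⋃ s : S, ⋃ p ∈ R x', edgesIn (starGraph (γ s p)))) :
    ∃ ω : X → Fin (3 * (Fintype.card S) ^ 2 * m * L + 1),
      ∀ x x' : X, x ≠ x' → ω x = ω x' →
        Disjoint (⋃ s : S, ⋃ p ∈ R x, squaresIn (starPlane (γ s p)))
          (⋃ s : S, ⋃ p ∈ R x', squaresIn (starPlane (γ s p))) := by
  classical
  set N := 3 * (Fintype.card S) ^ 2 * m * L with hNdef
  set Rel : X → X → Prop := fun x x' =>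
    ∃ s s' : S, ∃ p ∈ R x, ∃ p' ∈ R x', ∃ k : Fin 3, γ s p k = γ s' p' k with hReldef
  have hsymm : ∀ x y, Rel x y → Rel y x := by
    rintro x y ⟨s, s', p, hp, p', hp', k, hk⟩
    exact ⟨s', s, p', hp', p, hp, k, hk.symm⟩
  have hdeg : ∀ x : X, ∃ F : Finset X, F.card ≤ N ∧ ∀ y, y ≠ x → Rel x y → y ∈ F := by
    intro x
    rcases isEmpty_or_nonempty P with hP | hP
    · refine ⟨∅, by simp, ?_⟩
      rintro y _ ⟨s, s', p, hp, _⟩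
      exact (hP.false p).elim
    have hother_ne : ∀ k : Fin 3, (if k = 0 then (1 : Fin 3) else 0) ≠ k := by decide
    set other : Fin 3 → Fin 3 := fun k => if k = 0 then 1 else 0 with hother
    set F : Finset X := Finset.univ.filter (fun y => y ≠ x ∧ Rel x y) with hF
    refine ⟨F, ?_, fun y hy hr => by simp [hF, hy, hr]⟩
    set A := (Finset.univ : Finset S) ×ˢ R x ×ˢ (Finset.univ : Finset S) ×ˢ
      (Finset.univ : Finset (Fin 3)) ×ˢ (Finset.univ : Finset (Fin L)) with hA
    have key : ∀ y : X, ∃ t : S × P × S × Fin 3 × Fin L, y ∈ F → t ∈ A ∧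
        ∃ p' ∈ R y, γ t.2.2.1 p' t.2.2.2.1 = γ t.1 t.2.1 t.2.2.2.1 ∧
          γ t.2.2.1 p' (other t.2.2.2.1) = t.2.2.2.2 := by
      intro y
      by_cases hy : y ∈ F
      · have hr : Rel x y := (Finset.mem_filter.mp hy).2.2
        obtain ⟨s, s', p, hp, p', hp', k, hk⟩ := hr
        refine ⟨(s, p, s', k, γ s' p' (other k)), fun _ => ⟨?_, p', hp', hk.symm, rfl⟩⟩
        simp only [hA, Finset.mem_product, Finset.mem_univ, and_true, true_and]
        exact hp
      · exact ⟨(Classical.arbitrary S, Classical.arbitrary P, Classical.arbitrary S,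
          0, ⟨0, by omega⟩), fun h => absurd h hy⟩
    choose g hg using key
    have hmaps : ∀ y ∈ F, g y ∈ A := fun y hy => (hg y hy).1
    have hinj : Set.InjOn g F := by
      intro y1 hy1 y2 hy2 heq
      by_contra hne
      obtain ⟨hA1, p1, hp1, hk1, ho1⟩ := hg y1 hy1
      obtain ⟨hA2, p2, hp2, hk2, ho2⟩ := hg y2 hy2
      rw [heq] at hk1 ho1
      set t := g y2
      set s' := t.2.2.1
      set k := t.2.2.2.1
      have hagree_k : γ s' p1 k = γ s' p2 k := hk1.trans hk2.symm
      have hagree_o : γ s' p1 (other k) = γ s' p2 (other k) := ho1.trans ho2.symm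
      have hko : k ≠ other k := (hother_ne k).symm
      obtain ⟨i0, hi0k, hi0o⟩ := fin3_third k (other k) hko
      have hagree : ∀ l, l ≠ i0 → γ s' p1 l = γ s' p2 l := by
        intro l hl
        rcases fin3_cover k (other k) i0 l hko hi0k hi0o hl with rfl | rfl
        · exact hagree_k
        · exact hagree_o
      obtain ⟨e, he1, he2⟩ := shared_edge hL (γ s' p1) (γ s' p2) i0 hagree
      have hm1 : e ∈ ⋃ s : S, ⋃ p ∈ R y1, edgesIn (starGraph (γ s p)) := by
        simp only [Set.mem_iUnion]
        exact ⟨s', p1, hp1, he1⟩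
      have hm2 : e ∈ ⋃ s : S, ⋃ p ∈ R y2, edgesIn (starGraph (γ s p)) := by
        simp only [Set.mem_iUnion]
        exact ⟨s', p2, hp2, he2⟩
      exact Set.disjoint_left.mp (hedisj y1 y2 hne) hm1 hm2
    have hcardA : A.card = Fintype.card S * ((R x).card * (Fintype.card S * (3 * L))) := by
      simp [hA, Finset.card_product]
    calc F.card ≤ A.card := Finset.card_le_card_of_injOn g hmaps hinj
      _ = Fintype.card S * ((R x).card * (Fintype.card S * (3 * L))) := hcardA
      _ ≤ Fintype.card S * (m * (Fintype.card S * (3 * L))) := by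
          apply Nat.mul_le_mul_left
          apply Nat.mul_le_mul_right
          exact hm x
      _ = N := by rw [hNdef]; ring
  obtain ⟨ω, hω⟩ := greedy_coloring_s17 Rel hsymm N hdeg
  refine ⟨ω, fun x x' hne hc => ?_⟩
  by_contra hnd
  rw [Set.not_disjoint_iff] at hnd
  obtain ⟨f, hf1, hf2⟩ := hnd
  simp only [Set.mem_iUnion] at hf1 hf2
  obtain ⟨s, p, hp, hfs⟩ := hf1
  obtain ⟨s', p', hp', hfs'⟩ := hf2
  obtain ⟨k, hk⟩ := squares_meet (γ s p) (γ s' p') f hfs hfs'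
  exact hω x x' hne ⟨s, s', p, hp, p', hp', k, hk⟩ hc
end
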